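/- arXiv:2605.17315 — 8 statements merged into one kernel-verified Lean document; each statement's English description precedes it below -/
import Mathlib

section
/- Let {D_n} be a system of Dedekind domains with limit D and let M be a maximal ideal of D. Then the localization D_M is a discrete valuation ring if and only if there exists n such that M ∩ D_n ⊄ (M ∩ D_j)² for all j ≥ n. -/
set_option synthInstance.maxHeartbeats 1000000

noncomputable section

/-- A *system of Dedekind domains* inside a field `K`: a strictly increasing chain
`D 0 ⊊ D 1 ⊊ ⋯` of subrings of `K` such that each `D n` is a Dedekind domain which is
not a field, every maximal ideal of `D i` survives (generates a proper ideal) in `D j`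
for `i < j`, and every maximal ideal of `D j` contracts to a maximal ideal of `D 0`. -/
structure DedekindSystem (K : Type*) [Field K] where
  D : ℕ → Subring K
  strictMono : StrictMono D
  dedekind : ∀ n, IsDedekindDomain (D n)
  not_field : ∀ n, ¬ IsField (D n)
  survives : ∀ i j (hij : i < j) (M : Ideal (D i)), M.IsMaximal →
    Ideal.map (Subring.inclusion (strictMono.monotone hij.le)) M ≠ ⊤
  contracts : ∀ j (M : Ideal (D j)), M.IsMaximal →
    (Ideal.comap (Subring.inclusion (strictMono.monotone (Nat.zero_le j))) M).IsMaximal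

/-- The limit `D = ⋃ₙ Dₙ` of a system of Dedekind domains. -/
def DedekindSystem.limit {K : Type*} [Field K] (S : DedekindSystem K) : Subring K :=
  ⨆ n, S.D n


theorem DedekindSystem.le_limit {K : Type*} [Field K] (S : DedekindSystem K) (n : ℕ) :
    S.D n ≤ S.limit :=
  le_iSup S.D n

/-- A discrete valuation ring: a local principal ideal domain that is not a field. -/
def IsDVR (R : Type*) [CommRing R] : Prop :=
  IsDomain R ∧ IsPrincipalIdealRing R ∧ IsLocalRing R ∧ ¬ IsField R

/-! Write `Vₙ` for the DVR `(Dₙ)_{M ∩ Dₙ}`. The `Vₙ` form a chain of local subrings of `D_M`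
whose union is `D_M`, and `M ∩ Dₙ ⊄ (M ∩ Dⱼ)²` says exactly that a uniformizer `ϖ` of `Vₙ` is
still a uniformizer of `Vⱼ`. If this holds for all `j ≥ n`, then `ϖ` stays irreducible in `D_M`,
and every nonzero element of `D_M`, lying in some `Vⱼ`, is a unit times a power of `ϖ`.
Conversely, let `t` be a uniformizer of `D_M`, lying in `Vₙ`. If `M ∩ Dₙ ⊆ (M ∩ Dⱼ)²`, then a
uniformizer `ϖ` of `Vⱼ` satisfies `ϖ² ∣ t ∣ ϖ` in `D_M`, so `ϖ` would be a unit. -/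

open IsLocalRing

theorem isDVR_iff_isDiscreteValuationRing {R : Type*} [CommRing R] [IsDomain R] :
    IsDVR R ↔ IsDiscreteValuationRing R := by
  refine ⟨fun ⟨_, hpid, hloc, hnf⟩ => ?_,
    fun h => ⟨‹_›, h.1, h.2, IsDiscreteValuationRing.not_isField R⟩⟩
  exact { hpid, hloc with not_a_field' := mt isField_iff_maximalIdeal_eq.mpr hnf }

theorem IsDiscreteValuationRing.irreducible_of_mem_maximalIdeal_of_notMem_sq {R : Type*}
    [CommRing R] [IsDomain R] [IsDiscreteValuationRing R] {x : R}
    (hx : x ∈ IsLocalRing.maximalIdeal R) (hx2 : x ∉ IsLocalRing.maximalIdeal R ^ 2) :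
    Irreducible x := by
  obtain ⟨ϖ, hϖ⟩ := IsDiscreteValuationRing.exists_irreducible R
  rw [hϖ.maximalIdeal_eq, Ideal.mem_span_singleton'] at hx
  obtain ⟨c, rfl⟩ := hx
  have hc : IsUnit c := by
    by_contra hc
    have hcm : c ∈ IsLocalRing.maximalIdeal R := hc
    rw [hϖ.maximalIdeal_eq, Ideal.mem_span_singleton'] at hcm
    obtain ⟨d, rfl⟩ := hcm
    rw [hϖ.maximalIdeal_eq, Ideal.span_singleton_pow, Ideal.mem_span_singleton] at hx2
    exact hx2 ⟨d, by ring⟩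
  exact (irreducible_isUnit_mul hc).mpr hϖ

theorem Ideal.IsMaximal.isPrimary_pow {R : Type*} [CommRing R] {I : Ideal R} (hI : I.IsMaximal)
    {n : ℕ} (hn : n ≠ 0) : (I ^ n).IsPrimary :=
  isPrimary_of_isMaximal_radical (by rwa [I.radical_pow hn, hI.isPrime.radical])

section LocalRingHom

variable {R P : Type*} [CommRing R] [CommRing P] (I : Ideal R) [I.IsPrime] (J : Ideal P)

theorem Localization.localRingHom_injective [IsDomain P] [J.IsPrime] {f : R →+* P}
    (hf : Function.Injective f) (hIJ : I = J.comap f) :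
    Function.Injective (localRingHom I J f hIJ) :=
  IsLocalization.map_injective_of_injective' (hN := fun h => h J.zero_mem) (hf' := hf) ..

theorem Localization.map_localRingHom_maximalIdeal_le_sq_iff [J.IsMaximal] (f : R →+* P)
    (hIJ : I = J.comap f) :
    (maximalIdeal (Localization.AtPrime I)).map (localRingHom I J f hIJ) ≤
      maximalIdeal (Localization.AtPrime J) ^ 2 ↔ I.map f ≤ J ^ 2 := by
  have hcomp : (localRingHom I J f hIJ).comp (algebraMap R (Localization.AtPrime I)) =
      (algebraMap P (Localization.AtPrime J)).comp f := RingHom.ext (localRingHom_to_map I J f hIJ)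
  rw [← AtPrime.map_eq_maximalIdeal (I := I), ← AtPrime.map_eq_maximalIdeal (I := J),
    Ideal.map_map, hcomp, ← Ideal.map_map, ← Ideal.map_pow, Ideal.map_le_iff_le_comap]
  have hdisj : Disjoint (J.primeCompl : Set P) ↑(J ^ 2) :=
    Set.disjoint_left.mpr fun _ hx hx2 => hx (Ideal.pow_le_self two_ne_zero hx2)
  rw [← Ideal.under_def, IsLocalization.under_map_of_isPrimary_disjoint _ _
    (‹J.IsMaximal›.isPrimary_pow two_ne_zero) hdisj, Ideal.map_le_iff_le_comap]

end LocalRingHom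

theorem isLocalHom_of_comp_eq {A B C : Type*} [Semiring A] [Semiring B] [Semiring C]
    {f : B →+* C} {g : A →+* B} {h : A →+* C} [IsLocalHom h] (hfg : f.comp g = h) :
    IsLocalHom g :=
  haveI : IsLocalHom (f.comp g) := hfg ▸ ‹_›
  isLocalHom_of_comp g f

section DirectedUnion

variable {W : Type*} [CommRing W] {R : ℕ → Type*} [∀ n, CommRing (R n)] {f : ∀ n, R n →+* W}
  {g : ∀ n j, n ≤ j → R n →+* R j}

theorem exists_le_apply_eq_of_comp_eq (hfg : ∀ n j (h : n ≤ j), (f j).comp (g n j h) = f n)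
    (hsurj : ∀ x, ∃ n y, f n y = x) (x : W) (m : ℕ) : ∃ n, m ≤ n ∧ ∃ y, f n y = x := by
  obtain ⟨n, y, rfl⟩ := hsurj x
  exact ⟨max n m, le_max_right n m, g n _ (le_max_left n m) y, RingHom.congr_fun (hfg ..) y⟩

theorem irreducible_apply_of_comp_eq [∀ n, IsLocalHom (f n)]
    (hf : ∀ n, Function.Injective (f n)) (hfg : ∀ n j (h : n ≤ j), (f j).comp (g n j h) = f n)
    (hsurj : ∀ x, ∃ n y, f n y = x) {n : ℕ} {ϖ : R n} (hϖ : ∀ j (h : n ≤ j), Irreducible (g n j h ϖ)) :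
    Irreducible (f n ϖ) := by
  have hfg_apply : ∀ j (h : n ≤ j), f j (g n j h ϖ) = f n ϖ := fun j h =>
    RingHom.congr_fun (hfg n j h) ϖ
  refine ⟨fun hu => (hϖ n le_rfl).not_isUnit (isUnit_of_map_unit (f n) _ ?_), fun a b hab => ?_⟩
  · rwa [hfg_apply]
  obtain ⟨l₁, hnl₁, a', rfl⟩ := exists_le_apply_eq_of_comp_eq hfg hsurj a n
  obtain ⟨l, hl₁l, b', rfl⟩ := exists_le_apply_eq_of_comp_eq hfg hsurj b l₁
  rw [← RingHom.congr_fun (hfg l₁ l hl₁l) a'] at hab ⊢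
  have hfac : g n l (hnl₁.trans hl₁l) ϖ = g l₁ l hl₁l a' * b' :=
    hf l (by rw [map_mul, hfg_apply, hab, RingHom.comp_apply])
  exact ((hϖ l _).isUnit_or_isUnit hfac).imp (IsUnit.map (f l)) (IsUnit.map (f l))

theorem isDiscreteValuationRing_of_comp_eq [IsDomain W] [∀ n, IsDomain (R n)]
    [∀ n, IsDiscreteValuationRing (R n)] [∀ n, IsLocalHom (f n)]
    (hf : ∀ n, Function.Injective (f n)) (hfg : ∀ n j (h : n ≤ j), (f j).comp (g n j h) = f n)
    (hsurj : ∀ x, ∃ n y, f n y = x) {n : ℕ} (hn : ∀ j (h : n ≤ j),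
      ¬ (maximalIdeal (R n)).map (g n j h) ≤ maximalIdeal (R j) ^ 2) :
    IsDiscreteValuationRing W := by
  obtain ⟨ϖ, hϖ⟩ := IsDiscreteValuationRing.exists_irreducible (R n)
  have hgϖ : ∀ j (h : n ≤ j), Irreducible (g n j h ϖ) := fun j h =>
    haveI := isLocalHom_of_comp_eq (hfg n j h)
    IsDiscreteValuationRing.irreducible_of_mem_maximalIdeal_of_notMem_sq
      (map_nonunit _ ϖ hϖ.not_isUnit) fun h2 =>
      hn j h (by rwa [hϖ.maximalIdeal_eq, Ideal.map_span, Set.image_singleton, Ideal.span_le,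
        Set.singleton_subset_iff])
  refine IsDiscreteValuationRing.ofHasUnitMulPowIrreducibleFactorization
    ⟨f n ϖ, irreducible_apply_of_comp_eq hf hfg hsurj hgϖ, fun {x} hx => ?_⟩
  obtain ⟨l, hl, y, rfl⟩ := exists_le_apply_eq_of_comp_eq hfg hsurj x n
  have hy : y ≠ 0 := by rintro rfl; exact hx (map_zero _)
  obtain ⟨k, hk⟩ := IsDiscreteValuationRing.associated_pow_irreducible hy (hgϖ l hl)
  refine ⟨k, ?_⟩
  simpa only [map_pow, ← RingHom.comp_apply, hfg] using (hk.map (f l)).symm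

theorem exists_forall_not_map_le_sq_of_comp_eq [IsDomain W] [IsDiscreteValuationRing W]
    [∀ n, IsDomain (R n)] [∀ n, IsDiscreteValuationRing (R n)] [∀ n, IsLocalHom (f n)]
    (hf : ∀ n, Function.Injective (f n)) (hfg : ∀ n j (h : n ≤ j), (f j).comp (g n j h) = f n)
    (hsurj : ∀ x, ∃ n y, f n y = x) :
    ∃ n, ∀ j (h : n ≤ j),
      ¬ (maximalIdeal (R n)).map (g n j h) ≤ maximalIdeal (R j) ^ 2 := by
  obtain ⟨t, ht⟩ := IsDiscreteValuationRing.exists_irreducible W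
  obtain ⟨n, t, rfl⟩ := hsurj t
  refine ⟨n, fun j h hle => ?_⟩
  obtain ⟨ϖ, hϖ⟩ := IsDiscreteValuationRing.exists_irreducible (R j)
  have hsq : f j ϖ ^ 2 ∣ f n t := by
    have hmem := hle (Ideal.mem_map_of_mem _ fun hu => ht.not_isUnit (hu.map (f n)))
    rw [hϖ.maximalIdeal_eq, Ideal.span_singleton_pow, Ideal.mem_span_singleton] at hmem
    rw [← hfg n j h, RingHom.comp_apply, ← map_pow]
    exact map_dvd _ hmem
  have hdvd : f n t ∣ f j ϖ := by
    rw [← Ideal.mem_span_singleton, ← ht.maximalIdeal_eq]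
    exact map_nonunit _ _ hϖ.not_isUnit
  have hϖ_ne : f j ϖ ≠ 0 := (map_ne_zero_iff _ (hf j)).mpr hϖ.ne_zero
  have hϖ_nonunit : ¬ IsUnit (f j ϖ) := fun hu => hϖ.not_isUnit (isUnit_of_map_unit _ _ hu)
  have hsq_dvd : f j ϖ ^ 2 ∣ f j ϖ ^ 1 := by rw [pow_one]; exact hsq.trans hdvd
  exact absurd ((pow_dvd_pow_iff hϖ_ne hϖ_nonunit).mp hsq_dvd) (by norm_num)

theorem isDiscreteValuationRing_iff_of_comp_eq [IsDomain W] [∀ n, IsDomain (R n)]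
    [∀ n, IsDiscreteValuationRing (R n)] [∀ n, IsLocalHom (f n)]
    (hf : ∀ n, Function.Injective (f n)) (hfg : ∀ n j (h : n ≤ j), (f j).comp (g n j h) = f n)
    (hsurj : ∀ x, ∃ n y, f n y = x) :
    IsDiscreteValuationRing W ↔
      ∃ n, ∀ j (h : n ≤ j),
        ¬ (maximalIdeal (R n)).map (g n j h) ≤ maximalIdeal (R j) ^ 2 :=
  ⟨fun _ => exists_forall_not_map_le_sq_of_comp_eq hf hfg hsurj,
    fun ⟨_, hn⟩ => isDiscreteValuationRing_of_comp_eq hf hfg hsurj hn⟩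

end DirectedUnion

namespace DedekindSystem

variable {K : Type*} [Field K] (S : DedekindSystem K)

theorem exists_le_mem (x : S.limit) (m : ℕ) : ∃ n, m ≤ n ∧ (x : K) ∈ S.D n := by
  obtain ⟨n, hn⟩ := (Subring.mem_iSup_of_directed S.strictMono.monotone.directed_le).mp x.2
  exact ⟨max n m, le_max_right n m, S.strictMono.monotone (le_max_left n m) hn⟩

theorem limit_ne_bot_of_isMaximal {M : Ideal S.limit} (hM : M.IsMaximal) : M ≠ ⊥ := by
  rintro rfl
  have hfield : IsField S.limit := Ring.isField_iff_maximal_bot.mpr hM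
  obtain ⟨N, hN⟩ := Ideal.exists_maximal (S.D 0)
  obtain ⟨x, hxN, hx0⟩ :=
    (Submodule.ne_bot_iff N).mp (Ring.ne_bot_of_isMaximal_of_not_isField hN (S.not_field 0))
  obtain ⟨y, hy⟩ := hfield.mul_inv_cancel
    ((map_ne_zero_iff _ (Subring.inclusion_injective (S.le_limit 0))).mpr hx0)
  obtain ⟨j, hj, hyj⟩ := S.exists_le_mem y 1
  refine S.survives 0 j hj N hN ((Ideal.eq_top_iff_one _).mpr ?_)
  have hyK : (x : K) * y = 1 := congrArg Subtype.val hy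
  have hinv : Subring.inclusion (S.strictMono.monotone (Nat.zero_le j)) x * ⟨y, hyj⟩ = 1 :=
    Subtype.ext hyK
  exact hinv ▸ Ideal.mul_mem_right _ _ (Ideal.mem_map_of_mem _ hxN)

variable (M : Ideal S.limit)

def contract (n : ℕ) : Ideal (S.D n) :=
  M.comap (Subring.inclusion (S.le_limit n))

theorem comap_contract {n j : ℕ} (h : n ≤ j) :
    (S.contract M j).comap (Subring.inclusion (S.strictMono.monotone h)) = S.contract M n :=
  rfl

instance isPrime_contract [M.IsPrime] (n : ℕ) : (S.contract M n).IsPrime :=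
  Ideal.comap_isPrime _ _

theorem exists_contract_ne_bot (hM : M ≠ ⊥) : ∃ n, S.contract M n ≠ ⊥ := by
  obtain ⟨x, hxM, hx0⟩ := (Submodule.ne_bot_iff M).mp hM
  obtain ⟨n, -, hn⟩ := S.exists_le_mem x 0
  have hx0' : (⟨x, hn⟩ : S.D n) ≠ 0 :=
    (map_ne_zero_iff _ (Subring.inclusion_injective (S.le_limit n))).mp hx0
  exact ⟨n, (Submodule.ne_bot_iff _).mpr ⟨⟨x, hn⟩, hxM, hx0'⟩⟩

theorem contract_zero_isMaximal [hM : M.IsMaximal] : (S.contract M 0).IsMaximal := by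
  obtain ⟨n, hn⟩ := S.exists_contract_ne_bot M (S.limit_ne_bot_of_isMaximal hM)
  have := S.dedekind n
  exact S.contracts n _ (Ideal.IsPrime.isMaximal inferInstance hn)

theorem contract_ne_bot [M.IsMaximal] (n : ℕ) : S.contract M n ≠ ⊥ := by
  intro h
  have h0 : S.contract M 0 = ⊥ := by
    rw [← S.comap_contract M (Nat.zero_le n), h]
    exact Ideal.comap_bot_of_injective _ (Subring.inclusion_injective _)
  exact Ring.ne_bot_of_isMaximal_of_not_isField (S.contract_zero_isMaximal M) (S.not_field 0) h0

instance isMaximal_contract [M.IsMaximal] (n : ℕ) : (S.contract M n).IsMaximal :=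
  haveI := S.dedekind n
  Ideal.IsPrime.isMaximal inferInstance (S.contract_ne_bot M n)

instance isDiscreteValuationRing_localization_contract [M.IsMaximal] (n : ℕ) :
    IsDiscreteValuationRing (Localization.AtPrime (S.contract M n)) :=
  haveI := S.dedekind n
  IsLocalization.AtPrime.isDiscreteValuationRing_of_dedekind_domain _ (S.contract_ne_bot M n) _

section Localization

variable [M.IsPrime]

def toLocalization (n : ℕ) :
    Localization.AtPrime (S.contract M n) →+* Localization.AtPrime M :=
  Localization.localRingHom _ M (Subring.inclusion (S.le_limit n)) rfl

def localizationMap {n j : ℕ} (h : n ≤ j) :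
    Localization.AtPrime (S.contract M n) →+* Localization.AtPrime (S.contract M j) :=
  Localization.localRingHom _ _ (Subring.inclusion (S.strictMono.monotone h)) rfl

instance isLocalHom_toLocalization (n : ℕ) : IsLocalHom (S.toLocalization M n) :=
  Localization.isLocalHom_localRingHom ..

theorem toLocalization_injective (n : ℕ) : Function.Injective (S.toLocalization M n) :=
  Localization.localRingHom_injective _ _ (Subring.inclusion_injective _) rfl

theorem toLocalization_comp_localizationMap {n j : ℕ} (h : n ≤ j) :
    (S.toLocalization M j).comp (S.localizationMap M h) = S.toLocalization M n :=
  (Localization.localRingHom_comp _ _ _ _ rfl _ rfl).symm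

theorem exists_toLocalization_eq (x : Localization.AtPrime M) :
    ∃ n y, S.toLocalization M n y = x := by
  obtain ⟨a, s, rfl⟩ := IsLocalization.exists_mk'_eq M.primeCompl x
  obtain ⟨m, -, ha⟩ := S.exists_le_mem a 0
  obtain ⟨n, hmn, hs⟩ := S.exists_le_mem s m
  exact ⟨n, IsLocalization.mk' _ (⟨a, S.strictMono.monotone hmn ha⟩ : S.D n) ⟨⟨s, hs⟩, s.2⟩,
    Localization.localRingHom_mk' ..⟩

end Localization

end DedekindSystem

/-- Let `D` be the limit of a system of Dedekind domains and `M` a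
maximal ideal of `D`.  Then `D_M` is a DVR iff there exists `n` such that
`M ∩ Dₙ ⊄ (M ∩ Dⱼ)²` for all `j ≥ n`. -/
theorem DedekindSystem.localization_isDVR_iff {K : Type*} [Field K] (S : DedekindSystem K)
    (M : Ideal S.limit) (hM : M.IsMaximal) :
    haveI := hM.isPrime
    (IsDVR (Localization.AtPrime M) ↔
      ∃ n : ℕ, ∀ j : ℕ, (hnj : n ≤ j) →
        ¬ (Ideal.map (Subring.inclusion (S.strictMono.monotone hnj))
              (Ideal.comap (Subring.inclusion (S.le_limit n)) M) ≤
            (Ideal.comap (Subring.inclusion (S.le_limit j)) M) ^ 2)) := by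
  have := hM
  rw [isDVR_iff_isDiscreteValuationRing, isDiscreteValuationRing_iff_of_comp_eq
    (S.toLocalization_injective M) (fun _ _ h => S.toLocalization_comp_localizationMap M h)
    (S.exists_toLocalization_eq M)]
  exact exists_congr fun n => forall₂_congr fun j h => not_congr
    (Localization.map_localRingHom_maximalIdeal_le_sq_iff _ _ _ rfl)
end
end

section
/- Let {D_n} be a system of Dedekind domains with limit D, and assume each D_n is a principal ideal domain. Then D is a Bézout domain (every finitely generated ideal of D is principal) of Krull dimension 1. -/
set_option synthInstance.maxHeartbeats 1000000

noncomputable section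

/-!
Every pair of elements of `D = ⋃ₙ Dₙ` lies in a single `Dₙ`, where the ideal they generate is
principal; so `D` is Bézout. A nonzero prime `P ⊊ Q` of `D` would contract, in a `Dₙ` containing
a nonzero element of `P` and an element of `Q ∖ P`, to a chain `0 ⊊ P ∩ Dₙ ⊊ Q ∩ Dₙ` of primes,
which a PID does not have; so `dim D ≤ 1`. Finally `D` is not a field: an element of a maximal
ideal `M` of `D₁` inverted in some `Dₙ` would force `M Dₙ = Dₙ`.
-/

theorem ringKrullDim_eq_one_of_not_isField {R : Type*} [CommRing R] [IsDomain R]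
    [Ring.KrullDimLE 1 R] (h : ¬ IsField R) : ringKrullDim R = 1 := by
  refine eq_of_le_of_not_lt (Ring.krullDimLE_iff.mp ‹_›) fun h' ↦ h ?_
  have : Ring.KrullDimLE 0 R := Ring.krullDimLE_iff.mpr (Order.le_of_lt_succ h')
  exact Ring.KrullDimLE.isField_of_isDomain

namespace Subring

variable {R : Type*} [CommRing R] {ι : Type*} [Nonempty ι] {A : ι → Subring R}

theorem exists_eq_inclusion_pair_of_directed (hA : Directed (· ≤ ·) A) (x y : ↥(⨆ i, A i)) :
    ∃ i, ∃ x' y' : A i, inclusion (le_iSup A i) x' = x ∧ inclusion (le_iSup A i) y' = y := by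
  obtain ⟨i, hi⟩ := (mem_iSup_of_directed hA).mp x.2
  obtain ⟨j, hj⟩ := (mem_iSup_of_directed hA).mp y.2
  obtain ⟨k, hik, hjk⟩ := hA i j
  exact ⟨k, ⟨x, hik hi⟩, ⟨y, hjk hj⟩, rfl, rfl⟩

theorem isBezout_iSup_of_directed (hA : Directed (· ≤ ·) A) [∀ i, IsBezout (A i)] :
    IsBezout ↥(⨆ i, A i) := by
  refine IsBezout.iff_span_pair_isPrincipal.mpr fun x y ↦ ?_
  obtain ⟨i, x, y, rfl, rfl⟩ := exists_eq_inclusion_pair_of_directed hA x y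
  rw [← Set.image_pair, ← Ideal.map_span]
  exact (IsBezout.span_pair_isPrincipal x y).map_ringHom _

theorem dimensionLEOne_iSup_of_directed (hA : Directed (· ≤ ·) A)
    [∀ i, Ring.DimensionLEOne (A i)] : Ring.DimensionLEOne ↥(⨆ i, A i) where
  maximalOfPrime {P} hP0 hP := by
    obtain ⟨Q, hQ, hPQ⟩ := P.exists_le_maximal hP.ne_top
    suffices Q ≤ P from le_antisymm hPQ this ▸ hQ
    intro b hbQ
    by_contra hbP
    obtain ⟨a, haP, ha0⟩ := Submodule.exists_mem_ne_zero_of_ne_bot hP0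
    obtain ⟨i, a, b, rfl, rfl⟩ := exists_eq_inclusion_pair_of_directed hA a b
    have hlt : P.comap (inclusion (le_iSup A i)) < Q.comap (inclusion (le_iSup A i)) :=
      lt_of_le_of_ne (Ideal.comap_mono hPQ) fun h ↦ hbP (h ▸ hbQ : b ∈ P.comap _)
    have haPi : a ∈ P.comap (inclusion (le_iSup A i)) := haP
    rw [Ring.DimensionLEOne.eq_bot_of_lt _ _ hlt, Ideal.mem_bot] at haPi
    exact ha0 (by rw [haPi, map_zero])

end Subring

namespace DedekindSystem

variable {K : Type*} [Field K] (S : DedekindSystem K)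

theorem directed : Directed (· ≤ ·) S.D :=
  S.strictMono.monotone.directed_le

theorem not_isUnit_of_mem_isMaximal {M : Ideal (S.D 0)} (hM : M.IsMaximal) {x : S.D 0}
    (hx : x ∈ M) : ¬ IsUnit (Subring.inclusion (S.le_limit 0) x) := by
  intro hunit
  obtain ⟨u, hu⟩ := hunit.exists_right_inv
  obtain ⟨n, hn⟩ := (Subring.mem_iSup_of_directed S.directed).mp u.2
  have h0 : 0 < n + 1 := n.succ_pos
  let incl := Subring.inclusion (S.strictMono.monotone h0.le)
  have : IsUnit (incl x) :=
    .of_mul_eq_one ⟨u, S.strictMono.monotone n.le_succ hn⟩ (Subtype.ext congr($hu.1))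
  exact S.survives 0 (n + 1) h0 M hM (Ideal.eq_top_of_isUnit_mem _ (Ideal.mem_map_of_mem _ hx) this)

theorem not_isField_limit : ¬ IsField S.limit := by
  intro hfield
  obtain ⟨M, hM⟩ := Ideal.exists_maximal (S.D 0)
  obtain ⟨x, hxM, hx0⟩ := Submodule.exists_mem_ne_zero_of_ne_bot
    (Ring.ne_bot_of_isMaximal_of_not_isField hM (S.not_field 0))
  refine S.not_isUnit_of_mem_isMaximal hM hxM ?_
  let := hfield.toField
  exact isUnit_iff_ne_zero.mpr fun h ↦ hx0 (Subring.inclusion_injective _ (by rw [h, map_zero]))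

end DedekindSystem

/-- If each member of a system of Dedekind domains is a principal ideal
domain, then the limit `D` is a Bézout domain of Krull dimension 1. -/
theorem DedekindSystem.bezout_of_pid {K : Type*} [Field K] (S : DedekindSystem K)
    (hpid : ∀ n, IsPrincipalIdealRing (S.D n)) :
    IsBezout S.limit ∧ ringKrullDim S.limit = 1 := by
  have : ∀ n, IsPrincipalIdealRing (S.D n) := hpid
  have : Ring.DimensionLEOne S.limit := Subring.dimensionLEOne_iSup_of_directed S.directed
  exact ⟨Subring.isBezout_iSup_of_directed S.directed,
    ringKrullDim_eq_one_of_not_isField S.not_isField_limit⟩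
end
end

section
/- Let F be a field and f(X) ∈ F[X] an irreducible polynomial with f(0) ≠ 0. If p is an odd prime, then f(X^p) is irreducible in F[X] if and only if f(X^{p^n}) is irreducible in F[X] for all n ≥ 1. Similarly, f(X^4) is irreducible in F[X] if and only if f(X^{2^n}) is irreducible in F[X] for all n ≥ 1. -/
/-!
Let `α` be a root of `f` (normalized to be monic). By Capelli's transfer principle, `f(X^m)` is
irreducible iff `X^m - α` is irreducible over `F(α)`: one direction is
`Polynomial.irreducible_comp`, the other a degree count in the root field of a factor.
For an odd prime `p`, `X^(p^n) - α` is irreducible iff `α` is not a `p`-th power, whatever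
`n ≥ 1`. For powers of two, `X^(2^n) - a` is irreducible as soon as `a` is neither a square nor
of the form `-4b⁴`, and irreducibility of `X⁴ - a` gives exactly these two conditions. The
induction passes to `K(√a)`: writing `z = s + t√a`, an equation `z² = ±√a` forces
`a = -4s⁴`, so `√a` is again neither a square nor of the form `-4y⁴ = -(2y²)²`.
-/

open Polynomial IntermediateField

theorem Associated.comp {R : Type*} [CommSemiring R] {p q : R[X]} (h : Associated p q)
    (r : R[X]) : Associated (p.comp r) (q.comp r) :=
  h.map (compRingHom r)

universe u

variable {K : Type u} [Field K]

theorem Polynomial.irreducible_map_sub_C_gen_of_irreducible_comp {f g : K[X]}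
    (h : Irreducible (f.comp g)) {E : Type*} [Field E] [Algebra K E] {x : E}
    (hx : minpoly K x = f) :
    Irreducible (g.map (algebraMap K K⟮x⟯) - C (AdjoinSimple.gen K x)) := by
  have hdeg := h.natDegree_pos
  rw [natDegree_comp] at hdeg
  have hg0 : g.natDegree ≠ 0 := (Nat.pos_of_mul_pos_left hdeg).ne'
  have hxi : IsIntegral K x := minpoly.ne_zero_iff.mp (by rw [hx]; rintro rfl; simp at h)
  set α := AdjoinSimple.gen K x
  set P := g.map (algebraMap K K⟮x⟯) - C α
  have hP : P.natDegree = g.natDegree := by simp [P, natDegree_sub_C]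
  have hP0 : P ≠ 0 := fun h0 => hg0 (by rw [← hP, h0, natDegree_zero])
  obtain ⟨q, hq, hqP⟩ := WfDvdMonoid.exists_irreducible_factor
    (fun hu => hg0 (hP ▸ natDegree_eq_zero_of_isUnit hu)) hP0
  have := Fact.mk hq
  have := (AdjoinRoot.powerBasis hq.ne_zero).finite
  have := adjoin.finiteDimensional hxi
  have : Module.Free K⟮x⟯ (AdjoinRoot q) := Module.Free.of_divisionRing _ _
  have : FiniteDimensional K (AdjoinRoot q) := .trans K K⟮x⟯ _
  have hroot : aeval (AdjoinRoot.root q) (f.comp g) = 0 := by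
    have hPr : aeval (AdjoinRoot.root q) P = 0 :=
      aeval_eq_zero_of_dvd_aeval_eq_zero hqP (AdjoinRoot.aeval_eq q ▸ AdjoinRoot.mk_self)
    have hg : aeval (AdjoinRoot.root q) g = algebraMap K⟮x⟯ (AdjoinRoot q) α := by
      simpa [P, sub_eq_zero, aeval_map_algebraMap] using hPr
    rw [aeval_comp, hg, aeval_algebraMap_apply, ← hx, ← minpoly_gen, minpoly.aeval, map_zero]
  have hfinrank : Module.finrank K (AdjoinRoot q) = f.natDegree * q.natDegree := by
    rw [← Module.finrank_mul_finrank K K⟮x⟯, adjoin.finrank hxi, hx,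
      (AdjoinRoot.powerBasis hq.ne_zero).finrank, AdjoinRoot.powerBasis_dim]
  have hle : f.natDegree * g.natDegree ≤ f.natDegree * q.natDegree := by
    rw [← hfinrank, ← natDegree_comp, ← natDegree_mul_leadingCoeff_inv _ h.ne_zero,
      minpoly.eq_of_irreducible h hroot]
    exact minpoly.natDegree_le _
  have hgq : g.natDegree ≤ q.natDegree :=
    Nat.le_of_mul_le_mul_left hle (Nat.pos_of_mul_pos_right hdeg)
  exact (associated_of_dvd_of_natDegree_le hqP hP0 (hP ▸ hgq)).irreducible hq

section QuadraticGen

variable {E : Type*} [Field E] [Algebra K E] {x : E} {a : K}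

theorem exists_eq_algebraMap_add_algebraMap_mul_gen (hx : minpoly K x = X ^ 2 - C a)
    (y : K⟮x⟯) :
    ∃ u v : K, y = algebraMap K K⟮x⟯ u + algebraMap K K⟮x⟯ v * AdjoinSimple.gen K x := by
  have hxi : IsIntegral K x :=
    minpoly.ne_zero_iff.mp (hx ▸ (monic_X_pow_sub_C a two_ne_zero).ne_zero)
  obtain ⟨g, hdeg, rfl⟩ := (adjoin.powerBasis hxi).exists_eq_aeval y
  have hdim : (adjoin.powerBasis hxi).dim = 2 := by simp [hx]
  rw [hdim] at hdeg
  refine ⟨g.coeff 0, g.coeff 1, ?_⟩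
  conv_lhs => rw [eq_X_add_C_of_natDegree_le_one (Nat.lt_succ_iff.mp hdeg)]
  simp [add_comm]

theorem eq_zero_of_algebraMap_add_algebraMap_mul_gen_eq_zero (hx : minpoly K x = X ^ 2 - C a)
    {u v : K} (h : algebraMap K K⟮x⟯ u + algebraMap K K⟮x⟯ v * AdjoinSimple.gen K x = 0) :
    u = 0 ∧ v = 0 := by
  have hv : v = 0 := by
    by_contra hv
    have hgen : AdjoinSimple.gen K x = algebraMap K K⟮x⟯ (-(u / v)) := by
      rw [map_neg, map_div₀]
      field_simp [(_root_.map_ne_zero _).mpr hv]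
      linear_combination h
    have := congrArg natDegree (minpoly_gen K x)
    rw [hgen, minpoly.eq_X_sub_C, hx, natDegree_X_sub_C, natDegree_X_pow_sub_C] at this
    exact absurd this (by norm_num)
  subst hv
  simpa using h

theorem gen_sq_of_minpoly_eq (hx : minpoly K x = X ^ 2 - C a) :
    AdjoinSimple.gen K x ^ 2 = algebraMap K K⟮x⟯ a := by
  have h := minpoly.aeval K (AdjoinSimple.gen K x)
  rw [minpoly_gen, hx] at h
  simpa [sub_eq_zero] using h

theorem exists_mul_sq_eq_neg_four_mul_pow_four_of_sq_eq_mul_gen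
    (hx : minpoly K x = X ^ 2 - C a) {c : K} {z : K⟮x⟯}
    (hz : z ^ 2 = algebraMap K K⟮x⟯ c * AdjoinSimple.gen K x) :
    ∃ s : K, a * c ^ 2 = -(4 * s ^ 4) := by
  obtain ⟨s, t, rfl⟩ := exists_eq_algebraMap_add_algebraMap_mul_gen hx z
  have key : algebraMap K K⟮x⟯ (s ^ 2 + a * t ^ 2)
      + algebraMap K K⟮x⟯ (2 * s * t - c) * AdjoinSimple.gen K x = 0 := by
    simp only [map_add, map_mul, map_sub, map_pow, map_ofNat]
    linear_combination hz - algebraMap K K⟮x⟯ t ^ 2 * gen_sq_of_minpoly_eq hx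
  obtain ⟨h1, h2⟩ := eq_zero_of_algebraMap_add_algebraMap_mul_gen_eq_zero hx key
  exact ⟨s, by linear_combination 4 * s ^ 2 * h1 - a * (2 * s * t + c) * h2⟩

theorem sq_ne_gen_of_minpoly_eq (hx : minpoly K x = X ^ 2 - C a)
    (ha : ∀ b : K, -(4 * b ^ 4) ≠ a) (y : K⟮x⟯) :
    y ^ 2 ≠ AdjoinSimple.gen K x := fun hy => by
  obtain ⟨s, hs⟩ := exists_mul_sq_eq_neg_four_mul_pow_four_of_sq_eq_mul_gen hx (c := 1)
    (by rw [map_one, one_mul, hy])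
  exact ha s (by linear_combination -hs)

theorem neg_four_mul_pow_four_ne_gen_of_minpoly_eq (hx : minpoly K x = X ^ 2 - C a)
    (ha : ∀ b : K, -(4 * b ^ 4) ≠ a) (y : K⟮x⟯) :
    -(4 * y ^ 4) ≠ AdjoinSimple.gen K x := fun hy => by
  obtain ⟨s, hs⟩ := exists_mul_sq_eq_neg_four_mul_pow_four_of_sq_eq_mul_gen hx (c := -1)
    (z := 2 * y ^ 2) (by rw [map_neg, map_one, ← hy]; ring)
  exact ha s (by linear_combination -hs)

end QuadraticGen

theorem X_pow_sub_C_irreducible_of_two_pow (n : ℕ) {a : K} (ha2 : ∀ b : K, b ^ 2 ≠ a)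
    (ha4 : ∀ b : K, -(4 * b ^ 4) ≠ a) : Irreducible (X ^ 2 ^ n - C a) := by
  induction n generalizing K a with
  | zero => simpa using irreducible_X_sub_C a
  | succ n ih =>
    rw [pow_succ]
    exact X_pow_mul_sub_C_irreducible (X_pow_sub_C_irreducible_of_prime Nat.prime_two ha2)
      fun _ _ _ _ hx =>
        ih (sq_ne_gen_of_minpoly_eq hx ha4) (neg_four_mul_pow_four_ne_gen_of_minpoly_eq hx ha4)

theorem neg_four_mul_pow_four_ne_of_irreducible_X_pow_four_sub_C {a : K}
    (H : Irreducible (X ^ 4 - C a)) (b : K) : -(4 * b ^ 4) ≠ a := by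
  rintro rfl
  have hquad : ∀ c : K, ¬IsUnit (X ^ 2 + C c * X + C (2 * b ^ 2)) := fun c hu => by
    have h2 : (X ^ 2 + C c * X + C (2 * b ^ 2)).natDegree = 2 := by compute_degree!
    exact two_ne_zero (h2 ▸ natDegree_eq_zero_of_isUnit hu)
  have hfac : (X ^ 4 - C (-(4 * b ^ 4)) : K[X]) =
      (X ^ 2 + C (-(2 * b)) * X + C (2 * b ^ 2)) * (X ^ 2 + C (2 * b) * X + C (2 * b ^ 2)) := by
    simp only [map_neg, map_mul, map_pow, map_ofNat]
    ring
  exact (H.isUnit_or_isUnit hfac).elim (hquad _) (hquad _)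

theorem X_pow_two_pow_sub_C_irreducible_of_X_pow_four_sub_C {a : K}
    (H : Irreducible (X ^ 4 - C a)) (n : ℕ) : Irreducible (X ^ 2 ^ n - C a) :=
  X_pow_sub_C_irreducible_of_two_pow n
    (pow_ne_of_irreducible_X_pow_sub_C H (by norm_num) (by norm_num))
    (neg_four_mul_pow_four_ne_of_irreducible_X_pow_four_sub_C H)

theorem irreducible_comp_X_pow_of_irreducible_comp_X_pow {f : K[X]} (hf : Irreducible f)
    {m k : ℕ} (hm : Irreducible (f.comp (X ^ m)))
    (H : ∀ (L : Type u) [Field L] (α : L),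
      Irreducible (X ^ m - C α) → Irreducible (X ^ k - C α)) :
    Irreducible (f.comp (X ^ k)) := by
  classical
  have hassoc := associated_normalize f
  rw [(hassoc.comp _).irreducible_iff] at hm ⊢
  exact irreducible_comp (monic_normalize hf.ne_zero) (monic_X_pow k) (hassoc.irreducible hf)
    fun _ _ _ _ hx => by
      simpa using H _ _ (by simpa using irreducible_map_sub_C_gen_of_irreducible_comp hm hx)

theorem irreducible_comp_pow_iff_general (F : Type*) [Field F] (f : Polynomial F)
    (hf : Irreducible f) :
    (∀ p : ℕ, p.Prime → Odd p →
      (Irreducible (f.comp (X ^ p)) ↔ ∀ n : ℕ, 1 ≤ n → Irreducible (f.comp (X ^ p ^ n)))) ∧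
    (Irreducible (f.comp (X ^ 4)) ↔ ∀ n : ℕ, 1 ≤ n → Irreducible (f.comp (X ^ 2 ^ n))) := by
  refine ⟨fun p hp hodd => ⟨fun h n hn => ?_, fun h => by simpa using h 1 le_rfl⟩,
    fun h n _ => ?_, fun h => h 2 one_le_two⟩
  · have hp2 : p ≠ 2 := by rintro rfl; exact absurd hodd (by decide)
    exact irreducible_comp_X_pow_of_irreducible_comp_X_pow hf h fun _ _ _ hα =>
      (X_pow_sub_C_irreducible_iff_of_prime_pow hp hp2 (by omega)).mpr
        ((X_pow_sub_C_irreducible_iff_of_prime hp).mp hα)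
  · exact irreducible_comp_X_pow_of_irreducible_comp_X_pow hf h fun _ _ _ hα =>
      X_pow_two_pow_sub_C_irreducible_of_X_pow_four_sub_C hα n

/-- Let `F` be a field and `f ∈ F[X]` irreducible with `f(0) ≠ 0`.
If `p` is an odd prime, then `f(X^p)` is irreducible iff `f(X^{pⁿ})` is irreducible for
all `n ≥ 1`; similarly `f(X⁴)` is irreducible iff `f(X^{2ⁿ})` is irreducible for all
`n ≥ 1`. -/
theorem irreducible_comp_pow_iff (F : Type*) [Field F] (f : Polynomial F)
    (hf : Irreducible f) (h0 : f.eval 0 ≠ 0) :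
    (∀ p : ℕ, p.Prime → Odd p →
      (Irreducible (f.comp (X ^ p)) ↔ ∀ n : ℕ, 1 ≤ n → Irreducible (f.comp (X ^ p ^ n)))) ∧
    (Irreducible (f.comp (X ^ 4)) ↔ ∀ n : ℕ, 1 ≤ n → Irreducible (f.comp (X ^ 2 ^ n))) :=
  irreducible_comp_pow_iff_general F f hf
end

section
/- Let p be a prime number and D = ⋃_{n≥0} ℚ[X^{1/p^n}, X^{-1/p^n}]. Then for each integer d ≥ 1: (1) p divides d if and only if the d-th cyclotomic polynomial Φ_d(X) is a prime element of D; (2) if p does not divide d, then Φ_d(X) is contained in countably infinitely many maximal ideals of D. -/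
/-!
`D` is the directed union of the rings `Dₙ ≅ ℚ[T, T⁻¹]`, `T = X^{1/pⁿ}`, which are principal ideal
domains; an element of `D` that is prime in `Dₙ` for all large `n` is prime in `D`, and a proper
ideal of `D` is determined by its traces on the `Dₙ`.

In `Dₙ` we have `Φ_d(X) = Φ_d(T^{pⁿ})`. If `p ∣ d` this is the irreducible `Φ_{dpⁿ}(T)`, so
`Φ_d(X)` is prime. If `p ∤ d`, then `Φ_d(X^{1/pⁿ}) = Φ_{dp}(X^{1/pⁿ⁺¹}) · Φ_d(X^{1/pⁿ⁺¹})` with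
both factors non-units. A maximal ideal containing `Φ_d(X)` therefore contains either some
`Φ_{dp}(X^{1/pⁿ⁺¹})` or every `Φ_d(X^{1/pⁿ})`, and in either case its traces are generated by
irreducible cyclotomic polynomials, which pins it down. The `Φ_{dp}(X^{1/pⁿ⁺¹})` are pairwise
coprime, so the maximal ideals containing them are pairwise distinct.
-/

set_option synthInstance.maxHeartbeats 1000000
set_option maxHeartbeats 1000000

open Polynomial AddMonoidAlgebra

noncomputable section

/-- The subgroup of `ℚ` generated by `{1/pⁿ : n ∈ ℕ}`. -/
def expGroup (p : ℕ) : AddSubgroup ℚ :=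
  AddSubgroup.closure (Set.range fun n : ℕ => ((p : ℚ) ^ n)⁻¹)

instance (p : ℕ) : UniqueSums (expGroup p) :=
  UniqueSums.of_injective_addHom ((expGroup p).subtype : _ →+ ℚ).toAddHom
    Subtype.val_injective inferInstance

/-- `D = ⋃_{n≥0} F[X^{1/pⁿ}, X^{-1/pⁿ}]`, realized as the group algebra `F[X;G]`
where `G` is the subgroup of `ℚ` generated by `{1/pⁿ : n ≥ 0}`. -/
abbrev LaurentUnion (F : Type*) [Field F] (p : ℕ) : Type _ :=
  AddMonoidAlgebra F (expGroup p)

instance (F : Type*) [Field F] (p : ℕ) : IsDomain (LaurentUnion F p) :=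
  NoZeroDivisors.to_isDomain _

/-- The element `1/pⁿ` of the subgroup `G`. -/
def expGen (p n : ℕ) : expGroup p :=
  ⟨((p : ℚ) ^ n)⁻¹, AddSubgroup.subset_closure ⟨n, rfl⟩⟩

/-- The monomial `X^{1/pⁿ}` in `D`. -/
def XRoot (F : Type*) [Field F] (p n : ℕ) : LaurentUnion F p :=
  AddMonoidAlgebra.single (expGen p n) 1

/-- The subring `Dₙ = F[X^{1/pⁿ}, X^{-1/pⁿ}]` of `D`, as a subalgebra. -/
def DSub (F : Type*) [Field F] (p n : ℕ) : Subalgebra F (LaurentUnion F p) :=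
  Algebra.adjoin F {XRoot F p n, AddMonoidAlgebra.single (-expGen p n) 1}

/-- The subring `Rₙ = F[X^{1/pⁿ}]` of `D`, as a subalgebra. -/
def RSub (F : Type*) [Field F] (p n : ℕ) : Subalgebra F (LaurentUnion F p) :=
  Algebra.adjoin F {XRoot F p n}

lemma XRoot_mem_DSub (F : Type*) [Field F] (p n : ℕ) : XRoot F p n ∈ DSub F p n :=
  Algebra.subset_adjoin (by simp)

lemma aeval_XRoot_mem_DSub (F : Type*) [Field F] (p n : ℕ) (f : Polynomial F) :
    Polynomial.aeval (XRoot F p n) f ∈ DSub F p n :=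
  Algebra.adjoin_le (Set.singleton_subset_iff.mpr (XRoot_mem_DSub F p n))
    (Polynomial.aeval_mem_adjoin_singleton _ _)

lemma aeval_XRoot_mem_RSub (F : Type*) [Field F] (p n : ℕ) (f : Polynomial F) :
    Polynomial.aeval (XRoot F p n) f ∈ RSub F p n :=
  Polynomial.aeval_mem_adjoin_singleton _ _

lemma XRoot_pow (F : Type*) [Field F] {p : ℕ} (hp : p ≠ 0) {m n : ℕ} (h : m ≤ n) :
    XRoot F p n ^ p ^ (n - m) = XRoot F p m := by
  rw [XRoot, XRoot, AddMonoidAlgebra.single_pow, one_pow]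
  congr 1
  ext
  have hp' : (p : ℚ) ≠ 0 := Nat.cast_ne_zero.mpr hp
  push_cast
  rw [nsmul_eq_mul]
  push_cast [expGen]
  field_simp
  rw [← pow_add, Nat.sub_add_cancel h]

lemma DSub_mono (F : Type*) [Field F] {p : ℕ} (hp : p ≠ 0) {m n : ℕ} (h : m ≤ n) :
    DSub F p m ≤ DSub F p n := by
  apply Algebra.adjoin_le
  rintro x (rfl | rfl)
  · rw [← XRoot_pow F hp h]
    exact pow_mem (Algebra.subset_adjoin (by simp)) _
  · rw [show (AddMonoidAlgebra.single (-expGen p m) 1 : LaurentUnion F p)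
        = (AddMonoidAlgebra.single (-expGen p n) 1 : LaurentUnion F p) ^ p ^ (n - m) from ?_]
    · exact pow_mem (Algebra.subset_adjoin (by simp)) _
    · rw [AddMonoidAlgebra.single_pow, one_pow]
      congr 1
      ext
      have hp' : (p : ℚ) ≠ 0 := Nat.cast_ne_zero.mpr hp
      push_cast
      rw [nsmul_eq_mul]
      push_cast [expGen]
      field_simp
      rw [← pow_add, Nat.add_sub_of_le h]

instance : Ring.DimensionLEOne (LaurentPolynomial ℚ) :=
  Ring.DimensionLEOne.localization (R := ℚ[X]) (LaurentPolynomial ℚ) (M := Submonoid.powers X)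
    (powers_le_nonZeroDivisors_of_noZeroDivisors X_ne_zero)

lemma Polynomial.prime_toLaurent_cyclotomic {m : ℕ} (hm : m ≠ 0) :
    Prime (toLaurent (cyclotomic m ℚ)) := by
  have hΦ : Prime (cyclotomic m ℚ) :=
    UniqueFactorizationMonoid.irreducible_iff_prime.mp (cyclotomic.irreducible_rat hm.bot_lt)
  have hX : X ∉ Ideal.span {cyclotomic m ℚ} := fun h => by
    have hroot : (cyclotomic m ℚ).IsRoot 0 := by
      rw [← dvd_iff_isRoot, map_zero, sub_zero]
      exact (hΦ.irreducible.associated_of_dvd irreducible_X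
        (Ideal.mem_span_singleton.mp h)).symm.dvd
    exact ((isRoot_cyclotomic_iff_charZero hm.bot_lt).mp hroot).ne_zero hm rfl
  have hspan := (Ideal.span_singleton_prime hΦ.ne_zero).mpr hΦ
  have hprime := IsLocalization.isPrime_of_isPrime_disjoint (Submonoid.powers X)
    (LaurentPolynomial ℚ) _ hspan ((Ideal.disjoint_powers_iff_notMem_of_isPrime _).mpr hX)
  rw [Ideal.map_span, Set.image_singleton, LaurentPolynomial.algebraMap_eq_toLaurent] at hprime
  exact (Ideal.span_singleton_prime (by simpa using hΦ.ne_zero)).mp hprime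

namespace LaurentUnion

open Filter

variable {p : ℕ}

lemma expGen_eq_nsmul_succ (hp : p ≠ 0) (n : ℕ) : expGen p n = p • expGen p (n + 1) := by
  ext
  simp only [expGen, pow_succ, mul_inv_rev, AddSubmonoidClass.mk_nsmul, nsmul_eq_mul]
  field_simp

lemma exists_zsmul_expGen_eq (hp : p ≠ 0) (g : expGroup p) :
    ∃ (n : ℕ) (z : ℤ), z • expGen p n = g := by
  have hmono : Monotone fun n : ℕ => AddSubgroup.zmultiples (((p : ℚ) ^ n)⁻¹) :=
    monotone_nat_of_le_succ fun n => by
      rw [AddSubgroup.zmultiples_le]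
      exact ⟨p, by simpa [expGen] using congrArg Subtype.val (expGen_eq_nsmul_succ hp n).symm⟩
  have hg : (g : ℚ) ∈ ⨆ n : ℕ, AddSubgroup.zmultiples (((p : ℚ) ^ n)⁻¹) :=
    AddSubgroup.closure_le _ |>.mpr (Set.range_subset_iff.mpr fun n =>
      AddSubgroup.mem_iSup_of_mem n (AddSubgroup.mem_zmultiples _)) g.2
  obtain ⟨n, z, hz⟩ := (AddSubgroup.mem_iSup_of_directed hmono.directed_le).mp hg
  exact ⟨n, z, Subtype.ext (by simpa [expGen] using hz)⟩

/-- The embedding `ℚ[T, T⁻¹] ≅ Dₙ ⊆ D`, `T ↦ X^{1/pⁿ}`. -/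
def levelHom (p n : ℕ) : LaurentPolynomial ℚ →ₐ[ℚ] LaurentUnion ℚ p :=
  AddMonoidAlgebra.mapDomainAlgHom ℚ ℚ (zmultiplesHom _ (expGen p n))

lemma levelHom_single (n : ℕ) (z : ℤ) (c : ℚ) :
    levelHom p n (AddMonoidAlgebra.single z c) = AddMonoidAlgebra.single (z • expGen p n) c := by
  simp only [levelHom, AddMonoidAlgebra.mapDomainAlgHom_apply, AddMonoidAlgebra.mapDomain_single,
    zmultiplesHom_apply]

lemma levelHom_injective (hp : p ≠ 0) (n : ℕ) : Function.Injective (levelHom p n) := by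
  refine AddMonoidAlgebra.mapDomain_injective fun a b h => ?_
  simpa [expGen, hp] using congrArg Subtype.val h

lemma levelHom_toLaurent (n : ℕ) (g : ℚ[X]) :
    levelHom p n (toLaurent g) = aeval (XRoot ℚ p n) g := by
  rw [← Polynomial.toLaurentAlg_apply, ← AlgHom.comp_apply]
  congr 1
  refine Polynomial.algHom_ext ?_
  rw [AlgHom.comp_apply, toLaurentAlg_apply, toLaurent_X, aeval_X]
  exact (levelHom_single n 1 1).trans (by rw [one_zsmul, XRoot])

lemma levelHom_range_mono (hp : p ≠ 0) : Monotone fun n => (levelHom p n).range :=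
  monotone_nat_of_le_succ fun n => by
    have h : zmultiplesHom _ (expGen p n) =
        (zmultiplesHom _ (expGen p (n + 1))).comp (zmultiplesHom ℤ (p : ℤ)) :=
      AddMonoidHom.ext_int (by simp [expGen_eq_nsmul_succ hp n, natCast_zsmul])
    simp only [levelHom, h, AddMonoidAlgebra.mapDomainAlgHom_comp]
    exact AlgHom.range_comp_le_range _ _

lemma eventually_exists_levelHom_eq (hp : p ≠ 0) (x : LaurentUnion ℚ p) :
    ∀ᶠ n in atTop, ∃ y, levelHom p n y = x := by
  suffices ∀ᶠ n in atTop, x ∈ (levelHom p n).range from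
    this.mono fun _ => (AlgHom.mem_range _).mp
  induction x using AddMonoidAlgebra.induction_linear with
  | zero => exact .of_forall fun n => zero_mem _
  | add x y hx hy => exact hx.and hy |>.mono fun n h => add_mem h.1 h.2
  | single g c =>
    obtain ⟨N, z, rfl⟩ := exists_zsmul_expGen_eq hp g
    exact eventually_atTop.mpr ⟨N, fun n hn =>
      levelHom_range_mono hp hn ⟨AddMonoidAlgebra.single z c, levelHom_single N z c⟩⟩

lemma prime_of_eventually_prime (hp : p ≠ 0) {y : LaurentUnion ℚ p}
    (hy : ∀ᶠ n in atTop, ∃ f, Prime f ∧ levelHom p n f = y) : Prime y := by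
  refine ⟨?_, ?_, ?_⟩
  · obtain ⟨n, f, hf, rfl⟩ := hy.exists
    exact (map_ne_zero_iff _ (levelHom_injective hp n)).mpr hf.ne_zero
  · intro hu
    obtain ⟨v, hv⟩ := hu.exists_right_inv
    obtain ⟨n, ⟨f, hf, rfl⟩, v', rfl⟩ := (hy.and (eventually_exists_levelHom_eq hp v)).exists
    rw [← map_mul, ← map_one (levelHom p n)] at hv
    exact hf.not_isUnit (.of_mul_eq_one _ (levelHom_injective hp n hv))
  · rintro a b ⟨c, hc⟩
    obtain ⟨n, ⟨f, hf, rfl⟩, ⟨a', rfl⟩, ⟨b', rfl⟩, ⟨c', rfl⟩⟩ :=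
      (hy.and ((eventually_exists_levelHom_eq hp a).and ((eventually_exists_levelHom_eq hp b).and
        (eventually_exists_levelHom_eq hp c)))).exists
    rw [← map_mul, ← map_mul] at hc
    exact (hf.dvd_or_dvd ⟨c', levelHom_injective hp n hc⟩).imp (map_dvd _) (map_dvd _)

lemma eq_of_eventually_comap_eq (hp : p ≠ 0) {M M' : Ideal (LaurentUnion ℚ p)}
    (h : ∀ᶠ n in atTop, M.comap (levelHom p n) = M'.comap (levelHom p n)) : M = M' := by
  ext x
  obtain ⟨n, hn, y, rfl⟩ := (h.and (eventually_exists_levelHom_eq hp x)).exists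
  exact SetLike.ext_iff.mp hn y

lemma comap_levelHom_eq_span {M : Ideal (LaurentUnion ℚ p)} (hM : M ≠ ⊤) {n : ℕ}
    {f : LaurentPolynomial ℚ} (hf : Prime f) (hfM : levelHom p n f ∈ M) :
    M.comap (levelHom p n) = Ideal.span {f} :=
  (hf.isMaximal_span_singleton.eq_of_le (Ideal.comap_ne_top _ hM)
    (Ideal.span_singleton_le_iff_mem _ |>.mpr hfM)).symm

lemma eq_of_eventually_prime_mem (hp : p ≠ 0) {M M' : Ideal (LaurentUnion ℚ p)} (hM : M ≠ ⊤)
    (hM' : M' ≠ ⊤) (h : ∀ᶠ n in atTop, ∃ f, Prime f ∧ levelHom p n f ∈ M ∧ levelHom p n f ∈ M') :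
    M = M' :=
  eq_of_eventually_comap_eq hp <| h.mono fun _ ⟨_, hf, hfM, hfM'⟩ =>
    (comap_levelHom_eq_span hM hf hfM).trans (comap_levelHom_eq_span hM' hf hfM').symm

def cyclotomicXRoot (p m n : ℕ) : LaurentUnion ℚ p :=
  aeval (XRoot ℚ p n) (cyclotomic m ℚ)

lemma cyclotomicXRoot_eq_levelHom (p m n : ℕ) :
    cyclotomicXRoot p m n = levelHom p n (toLaurent (cyclotomic m ℚ)) :=
  (levelHom_toLaurent n _).symm

lemma aeval_XRoot_succ_expand (hp : p ≠ 0) (n : ℕ) (f : ℚ[X]) :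
    aeval (XRoot ℚ p (n + 1)) (expand ℚ p f) = aeval (XRoot ℚ p n) f := by
  rw [expand_aeval, ← XRoot_pow ℚ hp (Nat.le_add_right n 1), Nat.add_sub_cancel_left, pow_one]

lemma cyclotomicXRoot_eq_of_dvd (hp : p.Prime) {m : ℕ} (hm : p ∣ m) (n : ℕ) :
    cyclotomicXRoot p m n = cyclotomicXRoot p (m * p) (n + 1) := by
  rw [cyclotomicXRoot, cyclotomicXRoot, ← cyclotomic_expand_eq_cyclotomic hp hm,
    aeval_XRoot_succ_expand hp.ne_zero]

lemma cyclotomicXRoot_eq_mul_of_not_dvd (hp : p.Prime) {m : ℕ} (hm : ¬p ∣ m) (n : ℕ) :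
    cyclotomicXRoot p m n = cyclotomicXRoot p (m * p) (n + 1) * cyclotomicXRoot p m (n + 1) := by
  rw [cyclotomicXRoot, cyclotomicXRoot, cyclotomicXRoot, ← map_mul,
    ← cyclotomic_expand_eq_cyclotomic_mul hp hm, aeval_XRoot_succ_expand hp.ne_zero]

lemma cyclotomicXRoot_eq_mul_pow (hp : p.Prime) {m : ℕ} (hm : p ∣ m) (n k : ℕ) :
    cyclotomicXRoot p m n = cyclotomicXRoot p (m * p ^ k) (n + k) := by
  induction k with
  | zero => simp
  | succ k ih =>
    rw [ih, cyclotomicXRoot_eq_of_dvd hp (hm.mul_right _), pow_succ, mul_assoc, add_assoc]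

lemma eventually_prime_cyclotomicXRoot (hp : p.Prime) {m : ℕ} (hm0 : m ≠ 0) (hm : p ∣ m)
    (n : ℕ) : ∀ᶠ N in atTop, ∃ f, Prime f ∧ levelHom p N f = cyclotomicXRoot p m n :=
  eventually_atTop.mpr ⟨n, fun N hN => by
    obtain ⟨k, rfl⟩ := Nat.exists_eq_add_of_le hN
    exact ⟨_, prime_toLaurent_cyclotomic (mul_ne_zero hm0 (pow_ne_zero k hp.ne_zero)),
      by rw [← cyclotomicXRoot_eq_levelHom, ← cyclotomicXRoot_eq_mul_pow hp hm]⟩⟩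

lemma prime_cyclotomicXRoot (hp : p.Prime) {m : ℕ} (hm0 : m ≠ 0) (hm : p ∣ m) (n : ℕ) :
    Prime (cyclotomicXRoot p m n) :=
  prime_of_eventually_prime hp.ne_zero (eventually_prime_cyclotomicXRoot hp hm0 hm n)

lemma setOf_cyclotomicXRoot_mem_subsingleton (hp : p.Prime) {m : ℕ} (hm0 : m ≠ 0) (hm : p ∣ m)
    (n : ℕ) : {M : Ideal (LaurentUnion ℚ p) | M ≠ ⊤ ∧ cyclotomicXRoot p m n ∈ M}.Subsingleton := by
  rintro M ⟨hM, hmM⟩ M' ⟨hM', hmM'⟩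
  refine eq_of_eventually_prime_mem hp.ne_zero hM hM' <|
    (eventually_prime_cyclotomicXRoot hp hm0 hm n).mono fun N ⟨f, hf, hfN⟩ => ?_
  exact ⟨f, hf, hfN ▸ hmM, hfN ▸ hmM'⟩

lemma setOf_forall_cyclotomicXRoot_mem_subsingleton (hp : p ≠ 0) {m : ℕ} (hm0 : m ≠ 0) :
    {M : Ideal (LaurentUnion ℚ p) | M ≠ ⊤ ∧ ∀ n, cyclotomicXRoot p m n ∈ M}.Subsingleton := by
  rintro M ⟨hM, hmM⟩ M' ⟨hM', hmM'⟩
  simp only [cyclotomicXRoot_eq_levelHom] at hmM hmM'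
  exact eq_of_eventually_prime_mem hp hM hM' <|
    .of_forall fun n => ⟨_, prime_toLaurent_cyclotomic hm0, hmM n, hmM' n⟩

lemma not_isUnit_cyclotomicXRoot (hp : p.Prime) {m : ℕ} (hm0 : m ≠ 0) (n : ℕ) :
    ¬IsUnit (cyclotomicXRoot p m n) := by
  by_cases hm : p ∣ m
  · exact (prime_cyclotomicXRoot hp hm0 hm n).not_isUnit
  · rw [cyclotomicXRoot_eq_mul_of_not_dvd hp hm]
    exact fun h => (prime_cyclotomicXRoot hp (mul_ne_zero hm0 hp.ne_zero) (dvd_mul_left p m)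
      (n + 1)).not_isUnit (isUnit_of_mul_isUnit_left h)

lemma not_irreducible_cyclotomicXRoot (hp : p.Prime) {m : ℕ} (hm0 : m ≠ 0) (hm : ¬p ∣ m)
    (n : ℕ) : ¬Irreducible (cyclotomicXRoot p m n) := fun h =>
  (h.isUnit_or_isUnit (cyclotomicXRoot_eq_mul_of_not_dvd hp hm n)).elim
    (not_isUnit_cyclotomicXRoot hp (mul_ne_zero hm0 hp.ne_zero) _)
    (not_isUnit_cyclotomicXRoot hp hm0 _)

lemma isCoprime_cyclotomicXRoot_of_lt (hp : p.Prime) {m : ℕ} (hm0 : m ≠ 0) (hm : p ∣ m)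
    {i j : ℕ} (hij : i < j) : IsCoprime (cyclotomicXRoot p m i) (cyclotomicXRoot p m j) := by
  obtain ⟨k, rfl⟩ := Nat.exists_eq_add_of_lt hij
  rw [cyclotomicXRoot_eq_mul_pow hp hm i (k + 1), ← add_assoc, cyclotomicXRoot, cyclotomicXRoot]
  have hne : m * p ^ (k + 1) ≠ m := fun h =>
    (Nat.one_lt_pow k.succ_ne_zero hp.one_lt).ne' ((mul_eq_left₀ hm0).mp h)
  exact (cyclotomic.isCoprime_rat hne).map (aeval (XRoot ℚ p (i + k + 1))).toRingHom

lemma cyclotomicXRoot_mul_dvd_cyclotomicXRoot_zero (hp : p.Prime) {m : ℕ} (hm : ¬p ∣ m) (n : ℕ) :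
    cyclotomicXRoot p (m * p) (n + 1) ∣ cyclotomicXRoot p m 0 := by
  have hdvd : ∀ n, cyclotomicXRoot p m n ∣ cyclotomicXRoot p m 0 := fun n => by
    induction n with
    | zero => rfl
    | succ n ih => exact (dvd_mul_left _ _).trans (cyclotomicXRoot_eq_mul_of_not_dvd hp hm n ▸ ih)
  exact (dvd_mul_right _ _).trans (cyclotomicXRoot_eq_mul_of_not_dvd hp hm n ▸ hdvd n)

lemma cyclotomicXRoot_mem_of_forall_notMem (hp : p.Prime) {m : ℕ} (hm : ¬p ∣ m)
    {P : Ideal (LaurentUnion ℚ p)} (hP : P.IsPrime) (h0 : cyclotomicXRoot p m 0 ∈ P)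
    (hQ : ∀ n, cyclotomicXRoot p (m * p) (n + 1) ∉ P) (n : ℕ) : cyclotomicXRoot p m n ∈ P := by
  induction n with
  | zero => exact h0
  | succ n ih =>
    rw [cyclotomicXRoot_eq_mul_of_not_dvd hp hm] at ih
    exact (hP.mem_or_mem ih).resolve_left (hQ n)

lemma setOf_isMaximal_cyclotomicXRoot_mem_countable (hp : p.Prime) {m : ℕ} (hm0 : m ≠ 0)
    (hm : ¬p ∣ m) :
    {M : Ideal (LaurentUnion ℚ p) | M.IsMaximal ∧ cyclotomicXRoot p m 0 ∈ M}.Countable := by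
  have hsub : {M : Ideal (LaurentUnion ℚ p) | M.IsMaximal ∧ cyclotomicXRoot p m 0 ∈ M} ⊆
      (⋃ n, {M | M ≠ ⊤ ∧ cyclotomicXRoot p (m * p) (n + 1) ∈ M}) ∪
        {M | M ≠ ⊤ ∧ ∀ n, cyclotomicXRoot p m n ∈ M} := by
    rintro M ⟨hM, h0⟩
    by_cases hQ : ∃ n, cyclotomicXRoot p (m * p) (n + 1) ∈ M
    · obtain ⟨n, hn⟩ := hQ
      exact Or.inl (Set.mem_iUnion.mpr ⟨n, hM.ne_top, hn⟩)
    · exact Or.inr ⟨hM.ne_top,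
        cyclotomicXRoot_mem_of_forall_notMem hp hm hM.isPrime h0 (not_exists.mp hQ)⟩
  have hmp : m * p ≠ 0 := mul_ne_zero hm0 hp.ne_zero
  refine .mono hsub <| .union (Set.countable_iUnion fun n => ?_) ?_
  · exact (setOf_cyclotomicXRoot_mem_subsingleton hp hmp (dvd_mul_left p m) (n + 1)).countable
  · exact (setOf_forall_cyclotomicXRoot_mem_subsingleton hp.ne_zero hm0).countable

lemma setOf_isMaximal_cyclotomicXRoot_mem_infinite (hp : p.Prime) {m : ℕ} (hm0 : m ≠ 0)
    (hm : ¬p ∣ m) :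
    {M : Ideal (LaurentUnion ℚ p) | M.IsMaximal ∧ cyclotomicXRoot p m 0 ∈ M}.Infinite := by
  have hmp : m * p ≠ 0 := mul_ne_zero hm0 hp.ne_zero
  have hQ (n : ℕ) : ∃ M : Ideal (LaurentUnion ℚ p), M.IsMaximal ∧
      cyclotomicXRoot p (m * p) (n + 1) ∈ M := by
    obtain ⟨M, hM, hle⟩ := Ideal.exists_le_maximal _
      (Ideal.span_singleton_ne_top (not_isUnit_cyclotomicXRoot hp hmp (n + 1)))
    exact ⟨M, hM, hle (Ideal.mem_span_singleton_self _)⟩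
  choose M hM hQM using hQ
  have hne {i j : ℕ} (hij : i < j) : M i ≠ M j := fun h => by
    obtain ⟨u, v, huv⟩ :=
      isCoprime_cyclotomicXRoot_of_lt hp hmp (dvd_mul_left p m) (Nat.succ_lt_succ hij)
    refine (hM i).ne_top ((Ideal.eq_top_iff_one _).mpr ?_)
    rw [← huv]
    exact add_mem (Ideal.mul_mem_left _ _ (hQM i)) (Ideal.mul_mem_left _ _ (h ▸ hQM j))
  exact Set.infinite_of_injective_forall_mem (.of_lt_imp_ne fun _ _ => hne) fun n =>
    ⟨hM n, Ideal.mem_of_dvd _ (cyclotomicXRoot_mul_dvd_cyclotomicXRoot_zero hp hm n) (hQM n)⟩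

end LaurentUnion

open LaurentUnion

/-- Let `p` be a prime and `D = ⋃_{n≥0} ℚ[X^{1/pⁿ}, X^{-1/pⁿ}]`.
For every `d ≥ 1`: (1) `p ∣ d` iff the `d`-th cyclotomic polynomial `Φ_d(X)` is a prime
element of `D`; (2) if `p ∤ d` then `Φ_d(X)` lies in countably infinitely many maximal
ideals of `D`. -/
theorem cyclotomic_prime_in_laurentUnion_iff (p : ℕ) (hp : p.Prime) (d : ℕ) (hd : 1 ≤ d) :
    (p ∣ d ↔ Prime (Polynomial.aeval (XRoot ℚ p 0) (Polynomial.cyclotomic d ℚ))) ∧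
    (¬ p ∣ d →
      {M : Ideal (LaurentUnion ℚ p) | M.IsMaximal ∧
        Polynomial.aeval (XRoot ℚ p 0) (Polynomial.cyclotomic d ℚ) ∈ M}.Countable ∧
      {M : Ideal (LaurentUnion ℚ p) | M.IsMaximal ∧
        Polynomial.aeval (XRoot ℚ p 0) (Polynomial.cyclotomic d ℚ) ∈ M}.Infinite) := by
  have hd0 : d ≠ 0 := Nat.one_le_iff_ne_zero.mp hd
  refine ⟨⟨fun hpd => prime_cyclotomicXRoot hp hd0 hpd 0, fun hprime => ?_⟩, fun hpd =>
    ⟨setOf_isMaximal_cyclotomicXRoot_mem_countable hp hd0 hpd,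
      setOf_isMaximal_cyclotomicXRoot_mem_infinite hp hd0 hpd⟩⟩
  by_contra hpd
  exact not_irreducible_cyclotomicXRoot hp hd0 hpd 0 hprime.irreducible
end
end

section
/- Let p be a prime number and F a field of characteristic p, and let f(X) ∈ F[X] be irreducible. If f(X^p) is not irreducible in F[X], then there exist an irreducible polynomial g(X) ∈ F[X] and a unit u ∈ F^× such that f(X^p) = u·g(X)^p. -/
/-!
Let `q = f(X^p)` and let `g` be an irreducible factor of `q`. Twisting coefficients by Frobenius
sends `q` to `f^p`, and `expand` sends the twist `g^(φ)` of `g` back to `g^p`. So `g^(φ) ∣ f^p`,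
whence `g^(φ) ~ f^j` as `f` is prime; expanding gives `g^p ~ q^j`, so `q ~ g^k` with `k * j = p`.
Since `p` is prime, either `q ~ g` is irreducible or `q ~ g^p`.
-/

open Polynomial

theorem associated_pow_pow_iff {M : Type*} [CommMonoidWithZero M] [IsCancelMulZero M] {a : M}
    (ha₀ : a ≠ 0) (ha : ¬IsUnit a) {m n : ℕ} : Associated (a ^ m) (a ^ n) ↔ m = n :=
  ⟨fun h => le_antisymm ((pow_dvd_pow_iff ha₀ ha).1 h.dvd) ((pow_dvd_pow_iff ha₀ ha).1 h.dvd'),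
    fun h => h ▸ Associated.refl _⟩

namespace Polynomial

section CommSemiring

variable {R : Type*} [CommSemiring R] (p : ℕ) [ExpChar R p]

theorem expand_map_frobenius (g : R[X]) : expand R p (g.map (frobenius R p)) = g ^ p := by
  rw [← map_expand, map_frobenius_expand]

end CommSemiring

variable {R : Type*} [CommRing R] [IsDomain R] {p : ℕ} [Fact p.Prime] [CharP R p]

theorem associated_expand_or_associated_pow_of_dvd_expand {f g : R[X]} (hf : Prime f)
    (hg : Prime g) (hdvd : g ∣ expand R p f) :
    Associated (expand R p f) g ∨ Associated (expand R p f) (g ^ p) := by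
  have hp : p.Prime := Fact.out
  obtain ⟨j, -, hj⟩ : ∃ j ≤ p, Associated (g.map (frobenius R p)) (f ^ j) := by
    refine (dvd_prime_pow hf p).1 ?_
    simpa only [map_frobenius_expand] using map_dvd (frobenius R p) hdvd
  have hgj : Associated (g ^ p) (expand R p f ^ j) := by
    simpa only [expand_map_frobenius, map_pow] using hj.map (expand R p)
  have hj0 : j ≠ 0 := by
    rintro rfl
    exact hg.not_isUnit (isUnit_pow_iff hp.ne_zero |>.1 (associated_one_iff_isUnit.1 hgj))
  obtain ⟨k, -, hk⟩ : ∃ k ≤ p, Associated (expand R p f) (g ^ k) :=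
    (dvd_prime_pow hg p).1 ((dvd_pow_self _ hj0).trans hgj.dvd')
  have hkj : p = k * j := by
    refine (associated_pow_pow_iff hg.ne_zero hg.not_isUnit).1 (hgj.trans ?_)
    simpa only [pow_mul] using hk.pow_pow
  rcases hp.eq_one_or_self_of_dvd k ⟨j, hkj⟩ with rfl | rfl
  · exact .inl (by simpa only [pow_one] using hk)
  · exact .inr hk

end Polynomial

/-- **Statement 11.** Let `p` be a prime, `F` a field of characteristic `p`, and
`f ∈ F[X]` irreducible.  If `f(X^p)` is not irreducible in `F[X]`, then
`f(X^p) = u·g(X)^p` for some irreducible `g ∈ F[X]` and a unit `u ∈ F`. -/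
theorem comp_pow_char_eq_pow_of_not_irreducible (p : ℕ) (hp : p.Prime)
    (F : Type*) [Field F] (hchar : ringChar F = p) (f : Polynomial F)
    (hf : Irreducible f) (hnot : ¬ Irreducible (f.comp (X ^ p))) :
    ∃ g : Polynomial F, Irreducible g ∧ ∃ u : F, u ≠ 0 ∧
      f.comp (X ^ p) = C u * g ^ p := by
  have : CharP F p := ringChar.of_eq hchar
  have : Fact p.Prime := ⟨hp⟩
  rw [← expand_eq_comp_X_pow] at hnot ⊢
  have hq : ¬IsUnit (expand F p f) := fun hu => by
    have := hu.map (mapRingHom (frobenius F p))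
    rw [coe_mapRingHom, map_frobenius_expand, isUnit_pow_iff hp.ne_zero] at this
    exact hf.not_isUnit this
  have hq₀ : expand F p f ≠ 0 := (expand_eq_zero hp.pos).not.2 hf.ne_zero
  obtain ⟨g, hg, hgq⟩ := WfDvdMonoid.exists_irreducible_factor hq hq₀
  rcases associated_expand_or_associated_pow_of_dvd_expand hf.prime hg.prime hgq with h | h
  · exact absurd (h.symm.irreducible hg) hnot
  · obtain ⟨v, hv⟩ := h.symm
    obtain ⟨u, hu, hCu⟩ := isUnit_iff.1 v.isUnit
    exact ⟨g, hg, u, hu.ne_zero, by rw [← hv, ← hCu, mul_comm]⟩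
end

section
/- Let p be a prime number, F a field of characteristic p that is an algebraic extension of ℤ/pℤ, D_n = F[X^{1/p^n}, X^{-1/p^n}] and D = ⋃_{n≥0} D_n. Then every nonzero nonunit of D_n fails to be irreducible as an element of D_{n+1}; in particular, D has no irreducible element. -/
/-! Because `F` is algebraic over `𝔽_p` it is perfect, and the exponent group `G` is `p`-divisible,
so every element of `D` is a `p`-th power: the `p`-th root of `∑ c_g X^g` is `∑ c_g^{1/p} X^{g/p}`,
which lies in `D_{n+1}` when the element lies in `D_n`. A `p`-th power is never irreducible. -/

set_option synthInstance.maxHeartbeats 1000000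
set_option maxHeartbeats 1000000

open Polynomial AddMonoidAlgebra

noncomputable section

namespace AddMonoidAlgebra

variable {R G : Type*} [CommSemiring R] [AddCommMonoid G] (p : ℕ) [ExpChar R p] [PerfectRing R p]

/-- Given `d : G →+ G` dividing exponents by `p`, this is `c • X^g ↦ c^{1/p} • X^{d g}`. -/
def pthRoot (d : G →+ G) : R[G] →+* R[G] :=
  (mapDomainRingHom R d).comp (mapRingHom G (frobeniusEquiv R p).symm)

theorem pthRoot_single (d : G →+ G) (g : G) (c : R) :
    pthRoot p d (single g c) = single (d g) ((frobeniusEquiv R p).symm c) := by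
  simp [pthRoot]

theorem pthRoot_pow (d : G →+ G) (hd : ∀ g, p • d g = g) (x : R[G]) :
    pthRoot p d x ^ p = x := by
  have : ExpChar R[G] p :=
    expChar_of_injective_ringHom (f := singleZeroRingHom) single_right_injective p
  suffices (frobenius R[G] p).comp (pthRoot p d) = RingHom.id _ from congr($this x)
  ext g c
  · simp [pthRoot_single, frobenius_def, single_pow]
  · simp [pthRoot_single, frobenius_def, single_pow, hd]

end AddMonoidAlgebra

lemma div_mem_expGroup {p : ℕ} {q : ℚ} (hq : q ∈ expGroup p) : q / p ∈ expGroup p := by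
  induction hq using AddSubgroup.closure_induction with
  | mem x hx =>
      obtain ⟨n, rfl⟩ := hx
      exact AddSubgroup.subset_closure ⟨n + 1, by rw [div_eq_mul_inv, ← mul_inv, ← pow_succ]⟩
  | zero => simp
  | add x y _ _ hx hy => simpa [add_div] using add_mem hx hy
  | neg x _ hx => simpa [neg_div] using neg_mem hx

def expGroupDiv (p : ℕ) : expGroup p →+ expGroup p where
  toFun g := ⟨g / p, div_mem_expGroup g.2⟩
  map_zero' := by ext; simp
  map_add' a b := by ext; push_cast; ring

lemma nsmul_expGroupDiv {p : ℕ} (hp : p ≠ 0) (g : expGroup p) : p • expGroupDiv p g = g := by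
  have hp' : (p : ℚ) ≠ 0 := Nat.cast_ne_zero.mpr hp
  ext
  simp [expGroupDiv, nsmul_eq_mul]
  field_simp

lemma expGroupDiv_expGen (p n : ℕ) : expGroupDiv p (expGen p n) = expGen p (n + 1) := by
  ext
  show ((p : ℚ) ^ n)⁻¹ / p = ((p : ℚ) ^ (n + 1))⁻¹
  rw [div_eq_mul_inv, ← mul_inv, ← pow_succ]

lemma pthRoot_mem_DSub {F : Type*} [Field F] {p : ℕ} [ExpChar F p] [PerfectRing F p] {n : ℕ}
    {a : LaurentUnion F p} (ha : a ∈ DSub F p n) :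
    pthRoot p (expGroupDiv p) a ∈ DSub F p (n + 1) := by
  induction ha using Algebra.adjoin_induction with
  | mem x hx =>
      rcases hx with rfl | rfl
      · rw [XRoot, pthRoot_single, map_one, expGroupDiv_expGen]
        exact XRoot_mem_DSub F p (n + 1)
      · rw [pthRoot_single, map_one, map_neg, expGroupDiv_expGen]
        exact Algebra.subset_adjoin (by simp)
  | algebraMap r =>
      simpa [coe_algebraMap, pthRoot_single]
        using Subalgebra.algebraMap_mem (DSub F p (n + 1)) ((frobeniusEquiv F p).symm r)
  | add x y _ _ hx hy => rw [map_add]; exact add_mem hx hy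
  | mul x y _ _ hx hy => rw [map_mul]; exact mul_mem hx hy

/-- Let `p` be a prime and `F` a field of characteristic `p` that is
an algebraic extension of `ℤ/pℤ`.  Then every nonzero nonunit of `Dₙ` fails to be
irreducible in `D_{n+1}`; in particular `D = ⋃_{n≥0} F[X^{1/pⁿ}, X^{-1/pⁿ}]` has no
irreducible element. -/
theorem laurentUnion_no_irreducible_of_algebraic_over_zmod (F : Type*) [Field F]
    (p : ℕ) (hp : p.Prime) (hchar : ringChar F = p)
    [Algebra (ZMod p) F] [Algebra.IsAlgebraic (ZMod p) F] :
    (∀ n : ℕ, ∀ a : DSub F p n, (a : LaurentUnion F p) ≠ 0 → ¬ IsUnit a →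
      ¬ Irreducible (⟨(a : LaurentUnion F p),
        DSub_mono F hp.ne_zero (Nat.le_succ n) a.2⟩ : DSub F p (n + 1))) ∧
    ∀ b : LaurentUnion F p, ¬ Irreducible b := by
  have : CharP F p := ringChar.eq_iff.mp hchar
  have : Fact p.Prime := ⟨hp⟩
  have : PerfectField F := Algebra.IsAlgebraic.perfectField (K := ZMod p)
  have pow_pthRoot (x : LaurentUnion F p) :
      pthRoot p (expGroupDiv p) x ^ p = x :=
    pthRoot_pow p _ (nsmul_expGroupDiv hp.ne_zero) x
  refine ⟨fun n a _ _ => ?_, fun b => ?_⟩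
  · rw [show (⟨a, _⟩ : DSub F p (n + 1)) = ⟨_, pthRoot_mem_DSub a.2⟩ ^ p from
      Subtype.ext (pow_pthRoot a).symm]
    exact not_irreducible_pow hp.ne_one
  · rw [← pow_pthRoot b]
    exact not_irreducible_pow hp.ne_one
end
end

section
/- Let F be a field with char(F) ≠ 2 and let f(X) ∈ F[X] be irreducible with f(0) ≠ 0. If f(X²) is not irreducible in F[X], then f(X²) = u·g(X)·g(−X) for some irreducible polynomial g(X) ∈ F[X] and some u ∈ F^×; moreover, g(X) and g(−X) are not associates in F[X]. -/
open Polynomial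

section Aux
variable {F : Type*} [Field F]

lemma aux_coeff_comp_neg_X (p : F[X]) (n : ℕ) :
    (p.comp (-X)).coeff n = (-1) ^ n * p.coeff n := by
  induction p using Polynomial.induction_on' with
  | add p q hp hq => simp [add_comp, hp, hq, mul_add]
  | monomial k a =>
    rw [monomial_comp, neg_pow, ← C_1, ← C_neg, ← C_pow, ← mul_assoc, ← C_mul,
      mul_comm a, C_mul_X_pow_eq_monomial]
    rcases eq_or_ne k n with rfl | h
    · simp [coeff_monomial, mul_comm]
    · simp [coeff_monomial, h]

lemma aux_even (h2 : (2 : F) ≠ 0) {p : F[X]} (hp : p.comp (-X) = p) :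
    ∃ q : F[X], q.comp (X ^ 2) = p := by
  have hodd : ∀ n, ¬ Even n → p.coeff n = 0 := by
    intro n hn
    have h := congrArg (fun r => r.coeff n) hp
    simp only [aux_coeff_comp_neg_X] at h
    rw [(Nat.not_even_iff_odd.mp hn).neg_one_pow, neg_one_mul] at h
    have : (2 : F) * p.coeff n = 0 := by linear_combination -h
    rcases mul_eq_zero.mp this with h | h
    · exact absurd h h2
    · exact h
  refine ⟨∑ k ∈ Finset.range (p.natDegree + 1), C (p.coeff (2 * k)) * X ^ k, ?_⟩
  ext n
  rw [Polynomial.sum_comp]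
  simp only [mul_comp, C_comp, pow_comp, X_comp, ← pow_mul, finset_sum_coeff,
    coeff_C_mul, coeff_X_pow]
  rcases Nat.even_or_odd n with ⟨m, hm⟩ | hodd'
  · have hn : n = 2 * m := by omega
    subst hn
    rcases lt_or_ge m (p.natDegree + 1) with hlt | hle
    · rw [Finset.sum_eq_single m]
      · simp
      · intro b _ hb
        simp [show ¬ (2 * m = 2 * b) by omega]
      · intro hm'; exact absurd (Finset.mem_range.mpr hlt) hm'
    · rw [Finset.sum_eq_zero, eq_comm, Polynomial.coeff_eq_zero_of_natDegree_lt]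
      · omega
      · intro b hb
        have hb' := Finset.mem_range.mp hb
        simp [show ¬ (2 * m = 2 * b) by omega]
  · rw [Finset.sum_eq_zero, eq_comm, hodd n (Nat.not_even_iff_odd.mpr hodd')]
    intro b _
    have : n ≠ 2 * b := by rintro rfl; exact (Nat.not_even_iff_odd.mpr hodd') ⟨b, by ring⟩
    simp [this]

lemma aux_comp_sq_inj : Function.Injective (fun p : F[X] => p.comp (X ^ 2)) := by
  intro a b h
  have h' : (a - b).comp (X ^ 2) = 0 := by simp only [sub_comp]; simp [h]
  rw [comp_eq_zero_iff] at h'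
  rcases h' with h' | ⟨_, h'⟩
  · exact sub_eq_zero.mp h'
  · exfalso
    have := congrArg natDegree h'
    simp [natDegree_X_pow] at this

/-- substitution X ↦ -X as a multiplicative equivalence -/
noncomputable def negXEquiv (F : Type*) [Field F] : F[X] ≃* F[X] where
  toFun p := p.comp (-X)
  invFun p := p.comp (-X)
  left_inv p := p.comp_neg_X_comp_neg_X
  right_inv p := p.comp_neg_X_comp_neg_X
  map_mul' p q := mul_comp p q (-X)

lemma aux_irr_comp_neg_X {g : F[X]} (hg : Irreducible g) :
    Irreducible (g.comp (-X)) :=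
  (MulEquiv.irreducible_iff (negXEquiv F)).mpr hg

end Aux
/-- **Statement 14.** Let `F` be a field with `char F ≠ 2` and `f ∈ F[X]` irreducible
with `f(0) ≠ 0`.  If `f(X²)` is not irreducible, then `f(X²) = u·g(X)·g(−X)` for some
irreducible `g ∈ F[X]` and `u ∈ Fˣ`, and moreover `g(X)` and `g(−X)` are not
associates in `F[X]`. -/
theorem comp_sq_factors_of_not_irreducible (F : Type*) [Field F] (hchar : ringChar F ≠ 2)
    (f : Polynomial F) (hf : Irreducible f) (h0 : f.eval 0 ≠ 0)
    (hnot : ¬ Irreducible (f.comp (X ^ 2))) :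
    ∃ g : Polynomial F, Irreducible g ∧ ∃ u : F, u ≠ 0 ∧
      f.comp (X ^ 2) = C u * g * g.comp (-X) ∧ ¬ Associated g (g.comp (-X)) := by
  have h2 : (2 : F) ≠ 0 := Ring.two_ne_zero hchar
  set P := f.comp (X ^ 2) with hPdef
  have hf0 : f ≠ 0 := hf.ne_zero
  have hX2 : (X ^ 2 : F[X]) ≠ C ((X ^ 2 : F[X]).coeff 0) := by
    intro h
    have := congrArg natDegree h
    simp [natDegree_X_pow] at this
  have hP0 : P ≠ 0 := by
    rw [hPdef, Ne, comp_eq_zero_iff]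
    push_neg
    exact ⟨hf0, fun _ => hX2⟩
  have hPunit : ¬ IsUnit P := by
    intro h
    have hd := natDegree_eq_zero_of_isUnit h
    rw [hPdef, natDegree_comp, natDegree_X_pow] at hd
    have := hf.natDegree_pos
    omega
  have hPeven : P.comp (-X) = P := by
    rw [hPdef, comp_assoc]
    congr 1
    simp [pow_comp]
  obtain ⟨g, hgirr, hgdvd⟩ :=
    WfDvdMonoid.exists_irreducible_factor hPunit hP0
  obtain ⟨m, hm⟩ := hgdvd
  have hg' : g.comp (-X) ∣ P :=
    ⟨m.comp (-X), by rw [← hPeven, hm, mul_comp]⟩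
  have hP0eval : P.eval 0 ≠ 0 := by
    rw [hPdef, eval_comp]
    simpa using h0
  by_cases hass : Associated g (g.comp (-X))
  · exfalso
    obtain ⟨u, hu⟩ := hass
    obtain ⟨c, hc_unit, hc⟩ := Polynomial.isUnit_iff.mp u.isUnit
    have hgc : g.comp (-X) = g * C c := by rw [← hu, hc]
    have hsq : g = g * C c * C c := by
      conv_lhs => rw [← comp_neg_X_comp_neg_X g, hgc, mul_comp, hgc, C_comp]
    have hc2 : c * c = 1 := by
      have hne : g ≠ 0 := hgirr.ne_zero
      have : g * 1 = g * (C c * C c) := by rw [mul_one]; rw [← mul_assoc]; exact hsq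
      have := mul_left_cancel₀ hne this
      have := congrArg (fun p : F[X] => p.coeff 0) this
      simpa using this.symm
    rcases mul_self_eq_one_iff.mp hc2 with rfl | rfl
    · -- g even
      have hgeven : g.comp (-X) = g := by rw [hgc]; simp
      have hmeven : m.comp (-X) = m := by
        have h1 := hPeven
        rw [hm, mul_comp, hgeven] at h1
        exact mul_left_cancel₀ hgirr.ne_zero h1
      obtain ⟨k, hk⟩ := aux_even h2 hgeven
      obtain ⟨n, hn⟩ := aux_even h2 hmeven
      have hfeq : f = k * n := by
        apply aux_comp_sq_inj
        simp only [mul_comp]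
        rw [hk, hn, ← hm, hPdef]
      rcases hf.isUnit_or_isUnit hfeq with hu' | hu'
      · obtain ⟨r, hr_unit, hr⟩ := Polynomial.isUnit_iff.mp hu'
        have hgC : g = C r := by rw [← hk, ← hr, C_comp]
        exact hgirr.not_isUnit (hgC ▸ isUnit_C.mpr hr_unit)
      · obtain ⟨r, hr_unit, hr⟩ := Polynomial.isUnit_iff.mp hu'
        have hmC : m = C r := by rw [← hn, ← hr, C_comp]
        have hassoc : Associated g P := by
          rw [hm, hmC]
          exact associated_mul_unit_right g (C r) (isUnit_C.mpr hr_unit)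
        exact hnot (hassoc.irreducible hgirr)
    · -- g odd
      have hg0 : g.eval 0 = 0 := by
        have h1 := congrArg (fun p : F[X] => p.eval 0) hgc
        simp only [eval_comp, eval_neg, eval_X, neg_zero, map_neg, map_one, eval_mul, eval_C, eval_one] at h1
        have : (2 : F) * g.eval 0 = 0 := by linear_combination h1
        rcases mul_eq_zero.mp this with h | h
        · exact absurd h h2
        · exact h
      apply hP0eval
      rw [hm, eval_mul, hg0, zero_mul]
  · have hg'irr := aux_irr_comp_neg_X hgirr
    have hg'dvd_m : g.comp (-X) ∣ m := by
      refine (hg'irr.prime.dvd_or_dvd (hm ▸ hg')).resolve_left ?_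
      intro hdvd
      exact hass (hg'irr.associated_of_dvd hgirr hdvd).symm
    obtain ⟨m', hm'⟩ := hg'dvd_m
    have hP : P = g * g.comp (-X) * m' := by rw [hm, hm']; ring
    have hGG : (g * g.comp (-X)).comp (-X) = g * g.comp (-X) := by
      rw [mul_comp, comp_neg_X_comp_neg_X]; ring
    have hm'even : m'.comp (-X) = m' := by
      have h1 := hPeven
      rw [hP, mul_comp, hGG] at h1
      exact mul_left_cancel₀ (mul_ne_zero hgirr.ne_zero hg'irr.ne_zero) h1
    obtain ⟨h, hh⟩ := aux_even h2 hGG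
    obtain ⟨n, hn⟩ := aux_even h2 hm'even
    have hfeq : f = h * n := by
      apply aux_comp_sq_inj
      simp only [mul_comp]
      rw [hh, hn, ← hP, hPdef]
    rcases hf.isUnit_or_isUnit hfeq with hu | hu
    · exfalso
      obtain ⟨r, _, hr⟩ := Polynomial.isUnit_iff.mp hu
      have : IsUnit (g * g.comp (-X)) := by
        rw [← hh, ← hr, C_comp]
        exact hr ▸ hu
      exact hgirr.not_isUnit (isUnit_of_mul_isUnit_left this)
    · obtain ⟨r, hr_unit, hr⟩ := Polynomial.isUnit_iff.mp hu
      have hm'C : m' = C r := by rw [← hn, ← hr, C_comp]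
      refine ⟨g, hgirr, r, hr_unit.ne_zero, ?_, hass⟩
      rw [hP, hm'C]
      ring
end

section
/- Let F be a field, R_n = F[X^{1/2^n}], D_n = F[X^{1/2^n}, X^{-1/2^n}] and D = ⋃_{n≥0} D_n. Fix n ≥ 0 and let f(X^{1/2^n}) be an irreducible element of R_n with f(0) ≠ 0. Then the following are equivalent: (1) f(X^{1/2^n}) is a prime element of D; (2) f(X^{1/2^n}) is an irreducible element of D; (3) f(X^4) is an irreducible element of F[X]; (4) f(X^{1/2^k}) is a prime element of D for all k ≥ 0. -/
set_option synthInstance.maxHeartbeats 1000000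
set_option maxHeartbeats 1000000

open Polynomial AddMonoidAlgebra

noncomputable section

/-!
In `D`, multiplying any element by a suitable power of the unit `X^{1/2^m}` turns it into a
polynomial in `X^{1/2^m}`, for every large `m`. Hence, when `f(0) ≠ 0`, divisibility by
`f(X^{1/2^n})` in `D` reduces to divisibility by the polynomials `f(X^{2^j})` in `F[X]`: the
element `f(X^{1/2^n})` is prime in `D` as soon as all `f(X^{2^j})` are irreducible, and a
factorisation of `f(X⁴)` yields one of `f(X^{1/2^n})` in `D`. Finally, `f(X⁴)` irreducible forces
all `f(X^{2^j})` to be irreducible by Capelli's theorem over `F(α)`, `α` a root of `f`: degree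
counting shows that `X⁴ - α` is irreducible over `F(α)`, so `α` is neither a square nor of the
form `-4c⁴`, which is exactly what the irreducibility of `X^{2^j} - α` requires.
-/

open Polynomial IntermediateField Filter

lemma isUnit_of_isUnit_comp {K : Type*} [Field K] {g q : K[X]} (hq : q.natDegree ≠ 0)
    (h : IsUnit (g.comp q)) : IsUnit g := by
  have hg0 : g ≠ 0 := by rintro rfl; simp at h
  have hdeg : g.natDegree = 0 := by
    simpa [natDegree_comp, hq] using natDegree_eq_zero_of_isUnit h
  rw [eq_C_of_natDegree_eq_zero hdeg, isUnit_C, isUnit_iff_ne_zero]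
  exact fun h0 => hg0 (by rw [eq_C_of_natDegree_eq_zero hdeg, h0, map_zero])

lemma Irreducible.of_comp {K : Type*} [Field K] {g q : K[X]} (hq : q.natDegree ≠ 0)
    (h : Irreducible (g.comp q)) : Irreducible g :=
  ⟨fun hu => h.not_isUnit (hu.map (compRingHom q)), fun a b hab =>
    (h.isUnit_or_isUnit (by rw [hab, mul_comp])).imp (isUnit_of_isUnit_comp hq)
      (isUnit_of_isUnit_comp hq)⟩

lemma isCoprime_X_pow_of_eval_zero_ne_zero {K : Type*} [Field K] {g : K[X]} (hg : g.eval 0 ≠ 0)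
    (t : ℕ) : IsCoprime (X ^ t) g :=
  ((irreducible_X.coprime_iff_not_dvd).2 (by rwa [X_dvd_iff, coeff_zero_eq_eval_zero])).pow_left

lemma eval_zero_comp_X_pow {R : Type*} [CommSemiring R] (g : R[X]) {n : ℕ} (hn : n ≠ 0) :
    (g.comp (X ^ n)).eval 0 = g.eval 0 := by
  simp [eval_comp, zero_pow hn]

lemma neg_four_mul_pow_four_eq_of_sq_eq {K L : Type*} [Field K] [Field L] [Algebra K L]
    {a : K} {g : L} (hg : minpoly K g = X ^ 2 - C a) {c d u : K} (hu : u ^ 2 = 1)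
    (h : (algebraMap K L c + algebraMap K L d * g) ^ 2 = algebraMap K L u * g) :
    -(4 * c ^ 4) = a := by
  have hg2 : g ^ 2 = algebraMap K L a := by
    simpa [hg, sub_eq_zero] using minpoly.aeval K g
  set P : K[X] := C (2 * c * d - u) * X + C (c ^ 2 + a * d ^ 2)
  have hP : aeval g P = 0 := by
    simp only [P, map_add, map_mul, map_sub, aeval_C, aeval_X, map_pow, map_ofNat]
    linear_combination h - algebraMap K L d ^ 2 * hg2
  have hP0 : P = 0 := by
    by_contra hP0
    have := (minpoly.degree_le_of_ne_zero K g hP0 hP).trans degree_linear_le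
    rw [hg, degree_X_pow_sub_C two_pos] at this
    exact absurd this (by decide)
  have h1 : 2 * c * d - u = 0 := by
    simpa only [P, Polynomial.coeff_add, coeff_C_mul_X, coeff_C, if_neg one_ne_zero, add_zero,
      if_true, Polynomial.coeff_zero] using congr_arg (Polynomial.coeff · 1) hP0
  have h0 : c ^ 2 + a * d ^ 2 = 0 := by
    simpa only [P, Polynomial.coeff_add, coeff_C_mul_X, coeff_C, if_neg zero_ne_one, zero_add,
      if_true, Polynomial.coeff_zero] using congr_arg (Polynomial.coeff · 0) hP0
  linear_combination -4 * c ^ 2 * h0 + a * (2 * c * d + u) * h1 + a * hu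

lemma exists_eq_algebraMap_add_algebraMap_mul_gen_s15 {K E : Type*} [Field K] [Field E] [Algebra K E]
    {x : E} (hx : IsIntegral K x) (h2 : (minpoly K x).natDegree = 2) (t : K⟮x⟯) :
    ∃ c d : K, t = algebraMap K _ c + algebraMap K _ d * AdjoinSimple.gen K x := by
  obtain ⟨r, hr, rfl⟩ := (adjoin.powerBasis hx).exists_eq_aeval t
  rw [adjoin.powerBasis_dim, h2] at hr
  refine ⟨r.coeff 0, r.coeff 1, ?_⟩
  conv_lhs => rw [eq_X_add_C_of_natDegree_le_one (Nat.lt_succ_iff.mp hr)]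
  simp only [map_add, map_mul, aeval_C, aeval_X, adjoin.powerBasis_gen]
  ring

theorem X_pow_two_pow_sub_C_irreducible {K : Type*} [Field K] {a : K}
    (hsq : ∀ b : K, b ^ 2 ≠ a) (hfour : ∀ c : K, -(4 * c ^ 4) ≠ a) (n : ℕ) :
    Irreducible (X ^ 2 ^ n - C a) := by
  induction n generalizing K with
  | zero => simpa using irreducible_X_sub_C a
  | succ n ih =>
    rw [pow_succ]
    refine X_pow_mul_sub_C_irreducible (X_pow_sub_C_irreducible_of_prime Nat.prime_two hsq) ?_
    intro E _ _ x hx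
    have hint : IsIntegral K x := by
      by_contra h
      exact X_pow_sub_C_ne_zero two_pos a (hx.symm.trans (minpoly.eq_zero h))
    have hdeg : (minpoly K x).natDegree = 2 := by rw [hx, natDegree_X_pow_sub_C]
    have hgen : minpoly K (AdjoinSimple.gen K x) = X ^ 2 - C a := (minpoly_gen K x).trans hx
    apply ih
    · intro b hb
      obtain ⟨c, d, rfl⟩ := exists_eq_algebraMap_add_algebraMap_mul_gen_s15 hint hdeg b
      exact hfour c (neg_four_mul_pow_four_eq_of_sq_eq hgen (one_pow 2) (by simpa using hb))
    · intro b hb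
      obtain ⟨c, d, hcd⟩ := exists_eq_algebraMap_add_algebraMap_mul_gen_s15 hint hdeg (2 * b ^ 2)
      refine hfour c
        (neg_four_mul_pow_four_eq_of_sq_eq hgen (c := c) (d := d) (u := -1) (by norm_num) ?_)
      rw [← hcd, map_neg, map_one]
      linear_combination -hb

theorem X_pow_two_pow_sub_C_irreducible_of_X_pow_four {K : Type*} [Field K] {a : K}
    (h : Irreducible (X ^ 4 - C a)) (n : ℕ) : Irreducible (X ^ 2 ^ n - C a) := by
  refine X_pow_two_pow_sub_C_irreducible
    (pow_ne_of_irreducible_X_pow_sub_C h (by norm_num) (by norm_num)) (fun c hc => ?_) n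
  -- Sophie Germain's identity
  have hfac : X ^ 4 - C a = (X ^ 2 - C (2 * c) * X + C (2 * c ^ 2)) *
      (X ^ 2 + C (2 * c) * X + C (2 * c ^ 2)) := by
    rw [← hc]; simp only [map_neg, map_mul, map_pow, map_ofNat]; ring
  have hdeg {s : K} : (X ^ 2 + C s * X + C (2 * c ^ 2)).natDegree ≠ 0 := by
    rw [show natDegree _ = 2 by compute_degree!]; norm_num
  rcases h.isUnit_or_isUnit hfac with hu | hu
  · exact hdeg (s := -(2 * c)) (by simpa [sub_eq_add_neg] using natDegree_eq_zero_of_isUnit hu)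
  · exact hdeg (natDegree_eq_zero_of_isUnit hu)

lemma natDegree_le_finrank_of_irreducible {F E : Type*} [Field F] [Field E] [Algebra F E]
    [FiniteDimensional F E] {q : F[X]} (hq : Irreducible q) {e : E} (he : aeval e q = 0) :
    q.natDegree ≤ Module.finrank F E := by
  have hint : IsIntegral F e := .of_finite F e
  calc q.natDegree ≤ (minpoly F e).natDegree :=
        natDegree_le_of_dvd ((minpoly.irreducible hint).dvd_symm hq (minpoly.dvd F e he))
          (minpoly.ne_zero hint)
    _ ≤ Module.finrank F E := minpoly.natDegree_le e

/-- A root of `X ^ m - α` over `F⟮α⟯` is a root of `f(X ^ m)`, so its degree over `F` is at least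
`m · deg f = m · [F⟮α⟯ : F]`. -/
lemma irreducible_X_pow_sub_C_gen_of_irreducible_comp {F E : Type*} [Field F] [Field E]
    [Algebra F E] {f : F[X]} {m : ℕ} {x : E} (hx : minpoly F x = f)
    (hf : Irreducible (f.comp (X ^ m))) :
    Irreducible (X ^ m - C (AdjoinSimple.gen F x)) := by
  have hm : m ≠ 0 := by
    rintro rfl
    exact not_irreducible_C _ (by simpa only [pow_zero, comp_one] using hf)
  have hint : IsIntegral F x := by
    by_contra h
    rw [minpoly.eq_zero h] at hx
    exact hf.ne_zero (by simp [← hx])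
  have hfdeg : 0 < f.natDegree := hx ▸ minpoly.natDegree_pos hint
  have := adjoin.finiteDimensional hint
  set P : F⟮x⟯[X] := X ^ m - C (AdjoinSimple.gen F x)
  have hP0 : P ≠ 0 := X_pow_sub_C_ne_zero (Nat.pos_of_ne_zero hm) _
  have hPu : ¬IsUnit P := fun h => hm (by simpa [P] using natDegree_eq_zero_of_isUnit h)
  obtain ⟨q, hq, hqP⟩ := WfDvdMonoid.exists_irreducible_factor hPu hP0
  suffices m ≤ q.natDegree from
    (associated_of_dvd_of_natDegree_le hqP hP0 (by rwa [natDegree_X_pow_sub_C])).irreducible hq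
  have := Fact.mk hq
  have hq0 := hq.ne_zero
  have : FiniteDimensional F⟮x⟯ (AdjoinRoot q) := (AdjoinRoot.powerBasis hq0).finite
  have : FiniteDimensional F (AdjoinRoot q) := .trans F F⟮x⟯ (AdjoinRoot q)
  have hroot : (AdjoinRoot.root q) ^ m = algebraMap F⟮x⟯ _ (AdjoinSimple.gen F x) := by
    have := aeval_eq_zero_of_dvd_aeval_eq_zero hqP (AdjoinRoot.aeval_eq q ▸ AdjoinRoot.mk_self)
    simpa [P, sub_eq_zero] using this
  have hcomp : aeval (AdjoinRoot.root q) (f.comp (X ^ m)) = 0 := by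
    rw [aeval_comp, map_pow, aeval_X, hroot, aeval_algebraMap_apply, ← hx,
      aeval_gen_minpoly, map_zero]
  have hle := natDegree_le_finrank_of_irreducible hf hcomp
  have htower := Module.finrank_mul_finrank F F⟮x⟯ (AdjoinRoot q)
  rw [adjoin.finrank hint, hx, (AdjoinRoot.powerBasis hq0).finrank,
    AdjoinRoot.powerBasis_dim] at htower
  rw [natDegree_comp, natDegree_X_pow, ← htower] at hle
  exact Nat.le_of_mul_le_mul_left hle hfdeg

theorem irreducible_comp_X_pow_two_pow_of_monic {F : Type*} [Field F] {f : F[X]} (hm : f.Monic)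
    (h4 : Irreducible (f.comp (X ^ 4))) (n : ℕ) : Irreducible (f.comp (X ^ 2 ^ n)) := by
  refine irreducible_comp hm (monic_X_pow _) (h4.of_comp (by simp)) fun E _ _ x hx => ?_
  rw [Polynomial.map_pow, map_X]
  exact X_pow_two_pow_sub_C_irreducible_of_X_pow_four
    (irreducible_X_pow_sub_C_gen_of_irreducible_comp hx h4) n

theorem irreducible_comp_X_pow_two_pow {F : Type*} [Field F] {f : F[X]}
    (h4 : Irreducible (f.comp (X ^ 4))) (n : ℕ) : Irreducible (f.comp (X ^ 2 ^ n)) := by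
  have hf0 : f ≠ 0 := (h4.of_comp (by simp)).ne_zero
  have hc : IsUnit (C f.leadingCoeff⁻¹) := isUnit_C.2 (by simpa using hf0)
  have := irreducible_comp_X_pow_two_pow_of_monic (monic_mul_leadingCoeff_inv hf0)
    (by rwa [mul_comp, C_comp, irreducible_mul_isUnit hc]) n
  rwa [mul_comp, C_comp, irreducible_mul_isUnit hc] at this

namespace LaurentUnion

variable {F : Type*} [Field F] {p : ℕ}

lemma XRoot_mul_single_neg (k : ℕ) :
    XRoot F p k * single (-expGen p k) 1 = 1 := by
  rw [XRoot, single_mul_single, add_neg_cancel, one_mul, one_def]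

lemma isUnit_XRoot (k : ℕ) : IsUnit (XRoot F p k) :=
  .of_mul_eq_one _ (XRoot_mul_single_neg k)

lemma aeval_XRoot_injective (hp : p ≠ 0) (k : ℕ) :
    Function.Injective (aeval (XRoot F p k) : F[X] → LaurentUnion F p) := by
  have hemb : Function.Injective (multiplesHom _ (expGen p k)) := by
    intro a b hab
    have h := congr_arg Subtype.val hab
    simp only [multiplesHom_apply, AddSubgroup.coe_nsmul, nsmul_eq_mul, expGen] at h
    exact_mod_cast mul_right_cancel₀ (by positivity) h
  have heq : (aeval (XRoot F p k) : F[X] →ₐ[F] LaurentUnion F p) =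
      (AddMonoidAlgebra.mapDomainAlgHom F F (multiplesHom _ (expGen p k))).comp
        (toFinsuppIsoAlg F).toAlgHom := by
    ext
    simp [XRoot, toFinsupp_X]
  rw [heq]
  exact (AddMonoidAlgebra.mapDomain_injective hemb).comp (toFinsuppIsoAlg F).injective

lemma aeval_XRoot_add_comp (hp : p ≠ 0) (g : F[X]) (k j : ℕ) :
    aeval (XRoot F p (k + j)) (g.comp (X ^ p ^ j)) = aeval (XRoot F p k) g := by
  rw [aeval_comp, map_pow, aeval_X, ← XRoot_pow F hp (Nat.le_add_right k j),
    Nat.add_sub_cancel_left]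

lemma eventually_mem_DSub (hp : p ≠ 0) (z : LaurentUnion F p) :
    ∀ᶠ k in atTop, z ∈ DSub F p k := by
  have hmono {z : LaurentUnion F p} {k : ℕ} (hz : z ∈ DSub F p k) :
      ∀ᶠ m in atTop, z ∈ DSub F p m :=
    eventually_atTop.2 ⟨k, fun _ hm => DSub_mono F hp hm hz⟩
  -- Track `X ^ g` together with `X ^ (-g)`, since `DSub F p k` is not closed under inverses.
  have hsingle (g : expGroup p) :
      ∀ᶠ k in atTop, single g (1 : F) ∈ DSub F p k ∧ single (-g) (1 : F) ∈ DSub F p k := by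
    obtain ⟨g, hg⟩ := g
    induction hg using AddSubgroup.closure_induction with
    | mem x hx =>
      obtain ⟨n, rfl⟩ := hx
      exact (hmono (XRoot_mem_DSub F p n)).and (hmono (Algebra.subset_adjoin (Or.inr rfl)))
    | zero =>
      refine .of_forall fun k => ?_
      change single (0 : expGroup p) (1 : F) ∈ _ ∧ single (-0 : expGroup p) (1 : F) ∈ _
      simp only [neg_zero, ← one_def, one_mem, and_self]
    | add x y hx hy ihx ihy =>
      filter_upwards [ihx, ihy] with k hxk hyk
      change single (⟨x, hx⟩ + ⟨y, hy⟩ : expGroup p) (1 : F) ∈ _ ∧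
        single (-(⟨x, hx⟩ + ⟨y, hy⟩) : expGroup p) (1 : F) ∈ _
      rw [neg_add_rev, ← one_mul (1 : F), ← single_mul_single, ← single_mul_single]
      exact ⟨mul_mem hxk.1 hyk.1, mul_mem hyk.2 hxk.2⟩
    | neg x hx ih =>
      change ∀ᶠ k in atTop, single (-⟨x, hx⟩ : expGroup p) (1 : F) ∈ _ ∧
        single (- -⟨x, hx⟩ : expGroup p) (1 : F) ∈ _
      simpa only [neg_neg, and_comm] using ih
  induction z using AddMonoidAlgebra.induction_linear with
  | zero => exact .of_forall fun k => zero_mem _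
  | add x y hx hy => filter_upwards [hx, hy] with k hxk hyk using add_mem hxk hyk
  | single g c =>
    filter_upwards [hsingle g] with k hk
    simpa [smul_single] using Subalgebra.smul_mem _ hk.1 c

lemma exists_XRoot_pow_mul_eq_aeval {k : ℕ} {z : LaurentUnion F p} (hz : z ∈ DSub F p k) :
    ∃ (t : ℕ) (q : F[X]), XRoot F p k ^ t * z = aeval (XRoot F p k) q := by
  induction hz using Algebra.adjoin_induction with
  | mem x hx =>
    rcases hx with rfl | rfl
    · exact ⟨0, X, by simp⟩
    · exact ⟨1, 1, by rw [pow_one, XRoot_mul_single_neg, map_one]⟩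
  | algebraMap r => exact ⟨0, C r, by simp⟩
  | add x y _ _ hx hy =>
    obtain ⟨s, q, hq⟩ := hx
    obtain ⟨t, r, hr⟩ := hy
    refine ⟨s + t, X ^ t * q + X ^ s * r, ?_⟩
    rw [map_add, map_mul, map_mul, map_pow, map_pow, aeval_X, ← hq, ← hr]
    ring
  | mul x y _ _ hx hy =>
    obtain ⟨s, q, hq⟩ := hx
    obtain ⟨t, r, hr⟩ := hy
    exact ⟨s + t, q * r, by rw [map_mul, ← hq, ← hr]; ring⟩

lemma eventually_exists_XRoot_pow_mul_eq_aeval (hp : p ≠ 0) (z : LaurentUnion F p) :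
    ∀ᶠ k in atTop, ∃ (t : ℕ) (q : F[X]), XRoot F p k ^ t * z = aeval (XRoot F p k) q :=
  (eventually_mem_DSub hp z).mono fun _ => exists_XRoot_pow_mul_eq_aeval

/-- Clearing denominators in `D` costs a power of `X`, which is coprime to `g` since
`g(0) ≠ 0`. -/
lemma exists_comp_dvd_of_aeval_XRoot_dvd (hp : p ≠ 0) {g h : F[X]} (hg : g.eval 0 ≠ 0) {k : ℕ}
    (hdvd : aeval (XRoot F p k) g ∣ aeval (XRoot F p k) h) :
    ∃ j, g.comp (X ^ p ^ j) ∣ h.comp (X ^ p ^ j) := by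
  obtain ⟨c, hc⟩ := hdvd
  obtain ⟨m, hkm, t, q, hq⟩ :=
    ((eventually_ge_atTop k).and (eventually_exists_XRoot_pow_mul_eq_aeval hp c)).exists
  obtain ⟨j, rfl⟩ := Nat.exists_eq_add_of_le hkm
  refine ⟨j, (isCoprime_X_pow_of_eval_zero_ne_zero ?_ t).symm.dvd_of_dvd_mul_left ⟨q, ?_⟩⟩
  · rwa [eval_zero_comp_X_pow _ (pow_ne_zero j hp)]
  · apply aeval_XRoot_injective hp (k + j)
    rw [map_mul, map_mul, map_pow, aeval_X, aeval_XRoot_add_comp hp, aeval_XRoot_add_comp hp, hc,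
      ← hq, mul_left_comm]

lemma isUnit_of_isUnit_aeval_XRoot (hp : p ≠ 0) {g : F[X]} (hg : g.eval 0 ≠ 0) {k : ℕ}
    (h : IsUnit (aeval (XRoot F p k) g)) : IsUnit g := by
  obtain ⟨j, hj⟩ := exists_comp_dvd_of_aeval_XRoot_dvd hp hg (h.dvd.trans (map_one _).symm.dvd)
  rw [one_comp] at hj
  exact isUnit_of_isUnit_comp (by simp [hp]) (isUnit_of_dvd_one hj)

theorem prime_aeval_XRoot (hp : p ≠ 0) {f : F[X]} (h0 : f.eval 0 ≠ 0)
    (hf : ∀ j, Prime (f.comp (X ^ p ^ j))) (k : ℕ) : Prime (aeval (XRoot F p k) f) := by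
  have hf' : Prime f := by simpa using hf 0
  refine ⟨fun h => hf'.ne_zero (aeval_XRoot_injective hp k (h.trans (map_zero _).symm)),
    fun h => hf'.not_isUnit (isUnit_of_isUnit_aeval_XRoot hp h0 h), fun a b hab => ?_⟩
  obtain ⟨_, hkm, ⟨s, qa, ha⟩, ⟨t, qb, hb⟩⟩ := ((eventually_ge_atTop k).and
    ((eventually_exists_XRoot_pow_mul_eq_aeval hp a).and
      (eventually_exists_XRoot_pow_mul_eq_aeval hp b))).exists
  obtain ⟨j, rfl⟩ := Nat.exists_eq_add_of_le hkm
  have hdvd : aeval (XRoot F p (k + j)) (f.comp (X ^ p ^ j)) ∣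
      aeval (XRoot F p (k + j)) (qa * qb) := by
    rw [aeval_XRoot_add_comp hp, map_mul, ← ha, ← hb, mul_mul_mul_comm]
    exact dvd_mul_of_dvd_right hab _
  obtain ⟨i, hi⟩ := exists_comp_dvd_of_aeval_XRoot_dvd hp
    (by rwa [eval_zero_comp_X_pow _ (pow_ne_zero j hp)]) hdvd
  rw [comp_assoc, X_pow_comp, ← pow_mul, ← pow_add, mul_comp] at hi
  have hback {q : F[X]} {u : ℕ} {z : LaurentUnion F p}
      (hq : XRoot F p (k + j) ^ u * z = aeval (XRoot F p (k + j)) q)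
      (hdvd : f.comp (X ^ p ^ (i + j)) ∣ q.comp (X ^ p ^ i)) : aeval (XRoot F p k) f ∣ z := by
    have := map_dvd (aeval (XRoot F p (k + j + i))) hdvd
    rw [aeval_XRoot_add_comp hp, ← hq, add_assoc, add_comm i j, aeval_XRoot_add_comp hp] at this
    exact ((isUnit_XRoot _).pow u).dvd_mul_left.mp this
  exact ((hf (i + j)).dvd_or_dvd hi).imp (hback ha) (hback hb)

theorem irreducible_comp_of_irreducible_aeval_XRoot (hp : p ≠ 0) {f : F[X]} (h0 : f.eval 0 ≠ 0)
    {k : ℕ} (h : Irreducible (aeval (XRoot F p k) f)) (j : ℕ) :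
    Irreducible (f.comp (X ^ p ^ j)) := by
  have hlift (g : F[X]) := aeval_XRoot_add_comp hp g k j
  refine ⟨fun hu => h.not_isUnit (hlift f ▸ hu.map _), fun a b hab => ?_⟩
  have hab0 : a.eval 0 * b.eval 0 = f.eval 0 := by
    rw [← eval_mul, ← hab, eval_zero_comp_X_pow _ (pow_ne_zero j hp)]
  refine (h.isUnit_or_isUnit (by rw [← hlift, hab, map_mul])).imp
    (isUnit_of_isUnit_aeval_XRoot hp (left_ne_zero_of_mul (hab0 ▸ h0)))
    (isUnit_of_isUnit_aeval_XRoot hp (right_ne_zero_of_mul (hab0 ▸ h0)))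

end LaurentUnion

theorem prime_in_laurentUnion_two_tfae_general (F : Type*) [Field F] (n : ℕ) (f : Polynomial F)
    (h0 : f.eval 0 ≠ 0) :
    [Prime (Polynomial.aeval (XRoot F 2 n) f),
     Irreducible (Polynomial.aeval (XRoot F 2 n) f),
     Irreducible (f.comp ((X : Polynomial F) ^ 4)),
     ∀ k : ℕ, Prime (Polynomial.aeval (XRoot F 2 k) f)].TFAE := by
  tfae_have 1 → 2 := Prime.irreducible
  tfae_have 2 → 3 := fun h =>
    LaurentUnion.irreducible_comp_of_irreducible_aeval_XRoot two_ne_zero h0 h 2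
  tfae_have 3 → 4 := fun h => LaurentUnion.prime_aeval_XRoot two_ne_zero h0 fun j =>
    (irreducible_comp_X_pow_two_pow h j).prime
  tfae_have 4 → 1 := fun h => h n
  tfae_finish

/-- **Statement 16.** Let `f(X^{1/2ⁿ})` be an irreducible element of `Rₙ = F[X^{1/2ⁿ}]`
with `f(0) ≠ 0`.  Then the following are equivalent: (1) `f(X^{1/2ⁿ})` is a prime
element of `D`; (2) `f(X^{1/2ⁿ})` is irreducible in `D`; (3) `f(X⁴)` is irreducible in
`F[X]`; (4) `f(X^{1/2ᵏ})` is a prime element of `D` for all `k ≥ 0`. -/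
theorem prime_in_laurentUnion_two_tfae (F : Type*) [Field F] (n : ℕ) (f : Polynomial F)
    (h0 : f.eval 0 ≠ 0)
    (hirr : Irreducible (⟨Polynomial.aeval (XRoot F 2 n) f,
      aeval_XRoot_mem_RSub F 2 n f⟩ : RSub F 2 n)) :
    [Prime (Polynomial.aeval (XRoot F 2 n) f),
     Irreducible (Polynomial.aeval (XRoot F 2 n) f),
     Irreducible (f.comp ((X : Polynomial F) ^ 4)),
     ∀ k : ℕ, Prime (Polynomial.aeval (XRoot F 2 k) f)].TFAE :=
  prime_in_laurentUnion_two_tfae_general F n f h0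
end
end
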